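/- arXiv:0912.4269 — 9 statements merged into one kernel-verified Lean document; each statement's English description precedes it below -/
import Mathlib

section
/- Let (Ω, F, P) be a probability space and p : Ω → [0,1] a precise p-test, i.e. a measurable function with P{p ≤ δ} = δ for every δ ∈ [0,1]. Then there exist a filtration (F_t)_{t∈[0,∞)} and a test martingale (X_t, F_t)_{t∈[0,∞)} (a nonnegative martingale with E[X_0] = 1) such that sup_{t∈[0,∞)} X_t = 1/p almost surely. In fact, the process defined by X_t(ω) = 1 for t ∈ [0,1), X_t(ω) = t for t ∈ [1, 1/p(ω)), and X_t(ω) = 0 for t ≥ 1/p(ω) is such a test martingale with respect to its natural filtration. -/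
/-!
`X_t = max 1 t · 1_{S_t}`, where `S_t` is everything for `t < 1` and `{p < 1/t}` for `t ≥ 1`. These
events decrease, and `P(S_t) = 1 / max 1 t` because a precise p-test is uniform. Declaring `S_t` an
atom of the σ-algebra at time `t` makes `X` a martingale: for `A` in that σ-algebra and `u ≥ t`,
`∫_A X_u` is `1` or `0` according as `A` contains `S_t` or misses it. Finally `sup_t X_t` is the
supremum of the `t < 1/p`, namely `1/p`.
-/

open MeasureTheory ENNReal NNReal

namespace MeasurableSpace

variable {Ω : Type*}

@[reducible]
def withAtom (m : MeasurableSpace Ω) (S : Set Ω) : MeasurableSpace Ω where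
  MeasurableSet' A := MeasurableSet[m] A ∧ (S ⊆ A ∨ Disjoint A S)
  measurableSet_empty := ⟨MeasurableSet.empty, Or.inr (Set.empty_disjoint S)⟩
  measurableSet_compl A := fun ⟨hA, hS⟩ =>
    ⟨hA.compl,
      hS.symm.imp Set.subset_compl_iff_disjoint_left.2 Set.disjoint_compl_left_iff_subset.2⟩
  measurableSet_iUnion f hf := by
    refine ⟨MeasurableSet.iUnion fun i => (hf i).1, ?_⟩
    by_cases h : ∃ i, S ⊆ f i
    · obtain ⟨i, hi⟩ := h
      exact Or.inl (hi.trans (Set.subset_iUnion f i))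
    · push Not at h
      exact Or.inr (Set.disjoint_iUnion_left.2 fun i => ((hf i).2.resolve_left (h i)))

variable {m : MeasurableSpace Ω} {S T : Set Ω}

theorem withAtom_le : withAtom m S ≤ m := fun _ hA => hA.1

theorem withAtom_mono (hTS : T ⊆ S) : withAtom m S ≤ withAtom m T :=
  fun _ ⟨hA, hS⟩ => ⟨hA, hS.imp (fun h => hTS.trans h) fun h => h.mono_right hTS⟩

theorem measurableSet_withAtom_self (hS : MeasurableSet[m] S) : MeasurableSet[withAtom m S] S :=
  ⟨hS, Or.inl subset_rfl⟩

end MeasurableSpace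

namespace MeasureTheory

open MeasurableSpace

variable {Ω ι : Type*} {m : MeasurableSpace Ω} [Preorder ι]

def Filtration.ofAntitoneAtoms (S : ι → Set Ω) (hS : Antitone S) : Filtration ι m :=
  ⟨fun t => withAtom m (S t), fun _ _ hst => withAtom_mono (hS hst), fun _ => withAtom_le⟩

theorem martingale_indicator_ofAntitoneAtoms {μ : Measure Ω} [IsFiniteMeasure μ] {S : ι → Set Ω}
    (hS : Antitone S) (hSm : ∀ t, MeasurableSet (S t)) {c : ι → ℝ} {k : ℝ}
    (hc : ∀ t, c t * μ.real (S t) = k) :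
    Martingale (fun t => (S t).indicator fun _ => c t) (Filtration.ofAntitoneAtoms S hS) μ := by
  have hint : ∀ t, Integrable ((S t).indicator fun _ => c t) μ :=
    fun t => (integrable_const _).indicator (hSm t)
  have hadapted : ∀ t, StronglyMeasurable[withAtom m (S t)] ((S t).indicator fun _ => c t) :=
    fun t => stronglyMeasurable_const.indicator (measurableSet_withAtom_self (hSm t))
  refine ⟨hadapted, fun i j hij => ?_⟩
  refine (ae_eq_condExp_of_forall_setIntegral_eq withAtom_le (hint j)
    (fun _ _ _ => (hint i).integrableOn) (fun A hA _ => ?_) (hadapted i).aestronglyMeasurable).symm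
  rcases hA.2 with hsub | hdisj
  · have h : ∀ t, S t ⊆ A → ∫ x in A, (S t).indicator (fun _ => c t) x ∂μ = k := fun t ht => by
      rw [setIntegral_indicator (hSm t), Set.inter_eq_right.2 ht, setIntegral_const, smul_eq_mul,
        mul_comm, hc]
    rw [h i hsub, h j ((hS hij).trans hsub)]
  · have h : ∀ t, Disjoint A (S t) → ∫ x in A, (S t).indicator (fun _ => c t) x ∂μ = 0 :=
      fun t ht => by rw [setIntegral_indicator (hSm t), ht.inter_eq, setIntegral_empty]
    rw [h i hdisj, h j (hdisj.mono_right (hS hij))]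

end MeasureTheory

theorem ENNReal.coe_lt_inv_ofReal_iff {t : ℝ≥0} (ht : t ≠ 0) (q : ℝ) :
    (t : ℝ≥0∞) < (ENNReal.ofReal q)⁻¹ ↔ q < (t : ℝ)⁻¹ := by
  rw [ENNReal.lt_inv_iff_lt_inv, ← ENNReal.coe_inv ht, ← ENNReal.ofReal_coe_nnreal,
    ENNReal.ofReal_lt_ofReal_iff (by positivity), NNReal.coe_inv]

section PreciseTest

variable {Ω : Type*} {m : MeasurableSpace Ω} {P : Measure Ω} {p : Ω → ℝ}

theorem measure_lt_eq_of_precise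
    (hprecise : ∀ δ ∈ Set.Icc (0 : ℝ) 1, P {ω | p ω ≤ δ} = ENNReal.ofReal δ)
    {u : ℝ} (hu0 : 0 < u) (hu1 : u ≤ 1) : P {ω | p ω < u} = ENNReal.ofReal u := by
  have hle : P {ω | p ω < u} ≤ ENNReal.ofReal u :=
    (measure_mono fun ω (h : p ω < u) => h.le).trans_eq (hprecise u ⟨hu0.le, hu1⟩)
  refine le_antisymm hle ?_
  refine ENNReal.ofReal_le_of_le_toReal (le_of_forall_lt_imp_le_of_dense fun δ hδ => ?_)
  rcases lt_or_ge δ 0 with hδ0 | hδ0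
  · exact hδ0.le.trans ENNReal.toReal_nonneg
  · calc δ = (P {ω | p ω ≤ δ}).toReal := by
          rw [hprecise δ ⟨hδ0, hδ.le.trans hu1⟩, ENNReal.toReal_ofReal hδ0]
      _ ≤ (P {ω | p ω < u}).toReal :=
          ENNReal.toReal_mono (hle.trans_lt ENNReal.ofReal_lt_top).ne
            (measure_mono fun ω (h : p ω ≤ δ) => h.trans_lt hδ)

theorem ae_mem_Ioc_of_precise [IsProbabilityMeasure P] (hmeas : Measurable p)
    (hprecise : ∀ δ ∈ Set.Icc (0 : ℝ) 1, P {ω | p ω ≤ δ} = ENNReal.ofReal δ) :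
    ∀ᵐ ω ∂P, p ω ∈ Set.Ioc 0 1 := by
  have hpos : ∀ᵐ ω ∂P, 0 < p ω := by
    simpa [ae_iff] using hprecise 0 ⟨le_rfl, zero_le_one⟩
  have hle : ∀ᵐ ω ∂P, p ω ≤ 1 := by
    rw [ae_iff_measure_eq (measurableSet_le hmeas measurable_const).nullMeasurableSet]
    simpa using hprecise 1 ⟨zero_le_one, le_rfl⟩
  filter_upwards [hpos, hle] with ω h0 h1 using ⟨h0, h1⟩

end PreciseTest

noncomputable section TestProcess

variable {Ω : Type*} {m : MeasurableSpace Ω} {P : Measure Ω} {p : Ω → ℝ}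

def testProcess (p : Ω → ℝ) (t : ℝ≥0) (ω : Ω) : ℝ :=
  if (t : ℝ) < 1 then 1 else if (t : ℝ≥0∞) < (ENNReal.ofReal (p ω))⁻¹ then (t : ℝ) else 0

def testProcessSupport (p : Ω → ℝ) (t : ℝ≥0) : Set Ω :=
  {ω | (t : ℝ) < 1 ∨ (t : ℝ≥0∞) < (ENNReal.ofReal (p ω))⁻¹}

theorem testProcess_eq_indicator (p : Ω → ℝ) (t : ℝ≥0) :
    testProcess p t = (testProcessSupport p t).indicator fun _ => max 1 (t : ℝ) := by
  funext ω
  by_cases ht : (t : ℝ) < 1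
  · simp [testProcess, testProcessSupport, ht, ht.le]
  · simp [testProcess, testProcessSupport, Set.indicator_apply, ht, le_of_not_gt ht]

theorem testProcess_nonneg (p : Ω → ℝ) (t : ℝ≥0) (ω : Ω) : 0 ≤ testProcess p t ω := by
  unfold testProcess
  split_ifs <;> positivity

theorem testProcessSupport_antitone (p : Ω → ℝ) : Antitone (testProcessSupport p) :=
  fun _ _ hst _ hω => hω.imp (lt_of_le_of_lt (NNReal.coe_le_coe.2 hst))
    (lt_of_le_of_lt (ENNReal.coe_le_coe.2 hst))

theorem measurableSet_testProcessSupport (hmeas : Measurable p) (t : ℝ≥0) :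
    MeasurableSet (testProcessSupport p t) :=
  (MeasurableSet.const _).union
    (measurableSet_lt measurable_const (ENNReal.measurable_ofReal.comp hmeas).inv)

theorem testProcessSupport_of_one_le {t : ℝ≥0} (ht : 1 ≤ (t : ℝ)) :
    testProcessSupport p t = {ω | p ω < (t : ℝ)⁻¹} := by
  have ht0 : t ≠ 0 := by rintro rfl; norm_num at ht
  ext ω
  simp [testProcessSupport, not_lt.2 ht, ENNReal.coe_lt_inv_ofReal_iff ht0]

theorem mul_measureReal_testProcessSupport [IsProbabilityMeasure P]
    (hprecise : ∀ δ ∈ Set.Icc (0 : ℝ) 1, P {ω | p ω ≤ δ} = ENNReal.ofReal δ) (t : ℝ≥0) :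
    max 1 (t : ℝ) * P.real (testProcessSupport p t) = 1 := by
  by_cases ht : (t : ℝ) < 1
  · have huniv : testProcessSupport p t = Set.univ := Set.eq_univ_of_forall fun _ => Or.inl ht
    simp [huniv, ht.le]
  · have ht1 : 1 ≤ (t : ℝ) := le_of_not_gt ht
    have htinv : 0 < (t : ℝ)⁻¹ := by positivity
    rw [max_eq_right ht1, testProcessSupport_of_one_le ht1, Measure.real,
      measure_lt_eq_of_precise hprecise htinv (inv_le_one_of_one_le₀ ht1),
      ENNReal.toReal_ofReal htinv.le, mul_inv_cancel₀ (zero_lt_one.trans_le ht1).ne']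

theorem iSup_testProcess {ω : Ω} (h0 : 0 < p ω) (h1 : p ω ≤ 1) :
    ⨆ t, testProcess p t ω = (p ω)⁻¹ := by
  have hval : ∀ t : ℝ≥0, 1 ≤ (t : ℝ) →
      testProcess p t ω = if (t : ℝ) < (p ω)⁻¹ then (t : ℝ) else 0 := fun t ht => by
    rw [testProcess_eq_indicator, testProcessSupport_of_one_le ht, Set.indicator_apply,
      max_eq_right ht]
    simp only [Set.mem_ofPred_eq, lt_inv_comm₀ h0 (zero_lt_one.trans_le ht)]
  refine ciSup_eq_of_forall_le_of_forall_lt_exists_gt (fun t => ?_) (fun w hw => ?_)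
  · rcases lt_or_ge (t : ℝ) 1 with ht | ht
    · rw [testProcess, if_pos ht]
      exact one_le_inv_iff₀.2 ⟨h0, h1⟩
    · rw [hval t ht]
      split_ifs with hlt
      exacts [hlt.le, inv_nonneg.2 h0.le]
  · rcases lt_or_ge w 1 with hw1 | hw1
    · exact ⟨0, by simpa [testProcess] using hw1⟩
    · let t : ℝ≥0 := ⟨(w + (p ω)⁻¹) / 2, by linarith⟩
      have ht : (t : ℝ) = (w + (p ω)⁻¹) / 2 := rfl
      refine ⟨t, ?_⟩
      rw [hval t (by linarith), if_pos (by linarith)]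
      linarith

end TestProcess

theorem precise_p_test_is_sup_of_test_martingale_general
    {Ω : Type*} {m : MeasurableSpace Ω} {P : Measure Ω} [IsProbabilityMeasure P]
    (p : Ω → ℝ) (hmeas : Measurable p)
    (hprecise : ∀ δ ∈ Set.Icc (0 : ℝ) 1, P {ω | p ω ≤ δ} = ENNReal.ofReal δ) :
    ∃ ℱ : Filtration ℝ≥0 m,
      Martingale
        (fun (t : ℝ≥0) ω =>
          if (t : ℝ) < 1 then (1 : ℝ)
          else if (t : ℝ≥0∞) < (ENNReal.ofReal (p ω))⁻¹ then (t : ℝ) else 0) ℱ P ∧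
      (∀ (t : ℝ≥0) ω, (0 : ℝ) ≤
          if (t : ℝ) < 1 then (1 : ℝ)
          else if (t : ℝ≥0∞) < (ENNReal.ofReal (p ω))⁻¹ then (t : ℝ) else 0) ∧
      (∫ ω, (if ((0 : ℝ≥0) : ℝ) < 1 then (1 : ℝ)
          else if ((0 : ℝ≥0) : ℝ≥0∞) < (ENNReal.ofReal (p ω))⁻¹ then ((0 : ℝ≥0) : ℝ) else 0)
          ∂P = 1) ∧
      (∀ᵐ ω ∂P,
        (⨆ t : ℝ≥0,
          if (t : ℝ) < 1 then (1 : ℝ)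
          else if (t : ℝ≥0∞) < (ENNReal.ofReal (p ω))⁻¹ then (t : ℝ) else 0)
        = (p ω)⁻¹) := by
  have hmart : Martingale (testProcess p)
      (Filtration.ofAntitoneAtoms _ (testProcessSupport_antitone p)) P := by
    rw [funext (testProcess_eq_indicator p)]
    exact martingale_indicator_ofAntitoneAtoms (testProcessSupport_antitone p)
      (measurableSet_testProcessSupport hmeas) (mul_measureReal_testProcessSupport hprecise)
  refine ⟨_, hmart, testProcess_nonneg p, by simp, ?_⟩
  filter_upwards [ae_mem_Ioc_of_precise hmeas hprecise] with ω hω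
  exact iSup_testProcess hω.1 hω.2

/-- For a precise p-test `p` (measurable, `[0,1]`-valued, with
`P{p ≤ δ} = δ` for all `δ ∈ [0,1]`), the explicit process
`X_t(ω) = 1` for `t ∈ [0,1)`, `X_t(ω) = t` for `t ∈ [1, 1/p(ω))` and `X_t(ω) = 0`
otherwise, is (with respect to a suitable filtration) a test martingale in continuous
time whose running supremum equals `1/p` almost surely. -/
theorem precise_p_test_is_sup_of_test_martingale
    {Ω : Type*} {m : MeasurableSpace Ω} {P : Measure Ω} [IsProbabilityMeasure P]
    (p : Ω → ℝ) (hmeas : Measurable p) (h01 : ∀ ω, p ω ∈ Set.Icc (0 : ℝ) 1)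
    (hprecise : ∀ δ ∈ Set.Icc (0 : ℝ) 1, P {ω | p ω ≤ δ} = ENNReal.ofReal δ) :
    ∃ ℱ : Filtration ℝ≥0 m,
      Martingale
        (fun (t : ℝ≥0) ω =>
          if (t : ℝ) < 1 then (1 : ℝ)
          else if (t : ℝ≥0∞) < (ENNReal.ofReal (p ω))⁻¹ then (t : ℝ) else 0) ℱ P ∧
      (∀ (t : ℝ≥0) ω, (0 : ℝ) ≤
          if (t : ℝ) < 1 then (1 : ℝ)
          else if (t : ℝ≥0∞) < (ENNReal.ofReal (p ω))⁻¹ then (t : ℝ) else 0) ∧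
      (∫ ω, (if ((0 : ℝ≥0) : ℝ) < 1 then (1 : ℝ)
          else if ((0 : ℝ≥0) : ℝ≥0∞) < (ENNReal.ofReal (p ω))⁻¹ then ((0 : ℝ≥0) : ℝ) else 0)
          ∂P = 1) ∧
      (∀ᵐ ω ∂P,
        (⨆ t : ℝ≥0,
          if (t : ℝ) < 1 then (1 : ℝ)
          else if (t : ℝ≥0∞) < (ENNReal.ofReal (p ω))⁻¹ then (t : ℝ) else 0)
        = (p ω)⁻¹) :=
  precise_p_test_is_sup_of_test_martingale_general p hmeas hprecise
end

section
/- Let f : [0,1] → [0,∞] be an increasing function with ∫₀¹ (1/f(x)) dx ≤ 1. Then f is a calibrator: for every probability space (Ω, F, P) and every p-test p on it, ∫ (1/f(p)) dP ≤ 1, i.e. f(p) is a Bayes factor for P. -/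
open MeasureTheory ENNReal Set

/-! A p-test puts at most Lebesgue mass on every lower set `L ⊆ ℝ`: `L ∩ [0,1]` contains
`[0, s)` for `s = sup (L ∩ [0,1])`, while `p⁻¹ L ⊆ {p ≤ s}`. Extending `f` monotonically beyond
`[0,1]`, every superlevel set of `1/f` is a lower set, so by the layer-cake formula
`∫ g dμ = ∫₀^∞ μ {g > t} dt` the integral of `1/f(p)` is at most `∫₀¹ 1/f ≤ 1`. -/

namespace MeasureTheory

variable {α : Type*} [MeasurableSpace α]

theorem volume_Ioi_inter_ofReal_lt (c : ℝ≥0∞) :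
    volume (Ioi (0 : ℝ) ∩ {t | ENNReal.ofReal t < c}) = c := by
  rcases eq_or_ne c ∞ with rfl | hc
  · simp
  · have hIoo : Ioi (0 : ℝ) ∩ {t | ENNReal.ofReal t < c} = Ioo 0 c.toReal := by
      ext t
      simp only [mem_inter_iff, mem_Ioi, mem_ofPred_eq, mem_Ioo, and_congr_right_iff]
      exact fun ht => ofReal_lt_iff_lt_toReal ht.le hc
    rw [hIoo, Real.volume_Ioo, sub_zero, ofReal_toReal hc]

theorem lintegral_eq_lintegral_meas_ofReal_lt (μ : Measure α) [SFinite μ] {g : α → ℝ≥0∞}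
    (hg : Measurable g) :
    ∫⁻ x, g x ∂μ = ∫⁻ t in Ioi (0 : ℝ), μ {x | ENNReal.ofReal t < g x} := by
  have hS : MeasurableSet {q : α × ℝ | ENNReal.ofReal q.2 < g q.1} :=
    measurableSet_lt (ENNReal.measurable_ofReal.comp measurable_snd) (hg.comp measurable_fst)
  calc ∫⁻ x, g x ∂μ
      = ∫⁻ x, (volume.restrict (Ioi (0 : ℝ))) {t | ENNReal.ofReal t < g x} ∂μ := by
        simp_rw [Measure.restrict_apply' measurableSet_Ioi, inter_comm _ (Ioi _),
          volume_Ioi_inter_ofReal_lt]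
    _ = (μ.prod (volume.restrict (Ioi 0))) {q | ENNReal.ofReal q.2 < g q.1} :=
        (Measure.prod_apply hS).symm
    _ = ∫⁻ t in Ioi (0 : ℝ), μ {x | ENNReal.ofReal t < g x} := Measure.prod_apply_symm hS

theorem lintegral_le_lintegral_of_meas_lt_le {β : Type*} [MeasurableSpace β]
    {μ : Measure α} {ν : Measure β} [SFinite μ] [SFinite ν] {g : α → ℝ≥0∞} {h : β → ℝ≥0∞}
    (hg : Measurable g) (hh : Measurable h)
    (hgh : ∀ t : ℝ, μ {x | ENNReal.ofReal t < g x} ≤ ν {y | ENNReal.ofReal t < h y}) :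
    ∫⁻ x, g x ∂μ ≤ ∫⁻ y, h y ∂ν := by
  rw [lintegral_eq_lintegral_meas_ofReal_lt μ hg, lintegral_eq_lintegral_meas_ofReal_lt ν hh]
  exact lintegral_mono hgh

end MeasureTheory

section PTest

variable {Ω : Type*} {m : MeasurableSpace Ω} {P : Measure Ω} {p : Ω → ℝ}

theorem measure_preimage_isLowerSet_le_volume (h01 : ∀ ω, p ω ∈ Icc (0 : ℝ) 1)
    (hptest : ∀ δ ∈ Icc (0 : ℝ) 1, P {ω | p ω ≤ δ} ≤ ENNReal.ofReal δ)
    {L : Set ℝ} (hL : IsLowerSet L) :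
    P (p ⁻¹' L) ≤ volume (L ∩ Icc 0 1) := by
  set s := sSup (L ∩ Icc (0 : ℝ) 1)
  have hbdd : BddAbove (L ∩ Icc (0 : ℝ) 1) := ⟨1, fun x hx => hx.2.2⟩
  have hs : s ∈ Icc (0 : ℝ) 1 :=
    ⟨Real.sSup_nonneg fun x hx => hx.2.1, Real.sSup_le (fun x hx => hx.2.2) zero_le_one⟩
  calc P (p ⁻¹' L) ≤ P {ω | p ω ≤ s} := measure_mono fun ω hω => le_csSup hbdd ⟨hω, h01 ω⟩
    _ ≤ ENNReal.ofReal s := hptest s hs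
    _ = volume (Ico 0 s) := by rw [Real.volume_Ico, sub_zero]
    _ ≤ volume (L ∩ Icc 0 1) := by
      refine measure_mono fun y hy => ?_
      have hne : (L ∩ Icc (0 : ℝ) 1).Nonempty := by
        refine nonempty_iff_ne_empty.2 fun hempty => ?_
        simp only [s, hempty, Real.sSup_empty, mem_Ico] at hy
        exact hy.2.not_ge hy.1
      obtain ⟨x, hx, hyx⟩ := exists_lt_of_lt_csSup hne hy.2
      exact ⟨hL hyx.le hx.1, hy.1, hyx.le.trans hx.2.2⟩

theorem lintegral_comp_le_setLIntegral_Icc_of_antitone [SFinite P] (hmeas : Measurable p)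
    (h01 : ∀ ω, p ω ∈ Icc (0 : ℝ) 1)
    (hptest : ∀ δ ∈ Icc (0 : ℝ) 1, P {ω | p ω ≤ δ} ≤ ENNReal.ofReal δ)
    {G : ℝ → ℝ≥0∞} (hG : Antitone G) :
    ∫⁻ ω, G (p ω) ∂P ≤ ∫⁻ x in Icc 0 1, G x := by
  refine lintegral_le_lintegral_of_meas_lt_le (hG.measurable.comp hmeas) hG.measurable fun t => ?_
  rw [Measure.restrict_apply' measurableSet_Icc]
  exact measure_preimage_isLowerSet_le_volume h01 hptest fun a b hba ha => ha.trans_le (hG hba)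

end PTest

/-- An increasing function `f : [0,1] → [0,∞]` with
`∫₀¹ (1/f(x)) dx ≤ 1` is a calibrator: for every probability space `(Ω, F, P)` and
every p-test `p` on it, `∫ (1/f(p)) dP ≤ 1`, i.e. `f ∘ p` is a Bayes factor for `P`. -/
theorem increasing_with_small_integral_is_calibrator
    (f : ℝ → ℝ≥0∞)
    (hmono : MonotoneOn f (Set.Icc (0 : ℝ) 1))
    (hint : ∫⁻ x in Set.Icc (0 : ℝ) 1, (f x)⁻¹ ≤ 1)
    {Ω : Type*} {m : MeasurableSpace Ω} (P : Measure Ω) [IsProbabilityMeasure P]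
    (p : Ω → ℝ) (hmeas : Measurable p) (h01 : ∀ ω, p ω ∈ Set.Icc (0 : ℝ) 1)
    (hptest : ∀ δ ∈ Set.Icc (0 : ℝ) 1, P {ω | p ω ≤ δ} ≤ ENNReal.ofReal δ) :
    ∫⁻ ω, (f (p ω))⁻¹ ∂P ≤ 1 := by
  set F : ℝ → ℝ≥0∞ := fun x => f (projIcc 0 1 zero_le_one x)
  have hF : Antitone fun x => (F x)⁻¹ := fun x y hxy =>
    ENNReal.inv_le_inv' <| hmono (Subtype.prop _) (Subtype.prop _) (monotone_projIcc _ hxy)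
  have hFf : ∀ x ∈ Icc (0 : ℝ) 1, F x = f x := fun x hx => by simp only [F, projIcc_of_mem _ hx]
  calc ∫⁻ ω, (f (p ω))⁻¹ ∂P = ∫⁻ ω, (F (p ω))⁻¹ ∂P := by simp only [hFf _ (h01 _)]
    _ ≤ ∫⁻ x in Icc 0 1, (F x)⁻¹ :=
      lintegral_comp_le_setLIntegral_Icc_of_antitone hmeas h01 hptest hF
    _ = ∫⁻ x in Icc 0 1, (f x)⁻¹ :=
      setLIntegral_congr_fun measurableSet_Icc fun x hx => by rw [hFf x hx]
    _ ≤ 1 := hint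
end

section
/- Every calibrator is dominated by an admissible calibrator: if f : [0,1] → [0,∞] is an increasing function with ∫₀¹ (1/f(x)) dx ≤ 1, then there exists an increasing function g : [0,1] → [0,∞] with g(x) ≤ f(x) for all x ∈ [0,1], g left-continuous, and ∫₀¹ (1/g(x)) dx = 1. -/
/-!
Replacing `f` by its left limit `f₋` keeps it increasing and below `f` and makes it
left-continuous; since a monotone function has only countably many jumps, `f₋ = f` almost
everywhere, so still `∫ 1/f₋ ≤ 1`. Capping `f₋` at height `1/c` turns `1/f₋` into
`max (1/f₋) c`, whose integral is `1`-Lipschitz in `c`, at most `1` at `c = 0` and at least `1`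
at `c = 1`; the intermediate value theorem provides a `c` for which it is exactly `1`.
-/

open MeasureTheory ENNReal Filter Topology

open scoped NNReal

namespace MeasureTheory

variable {α : Type*} [MeasurableSpace α] {μ : Measure α}

lemma lintegral_max_add_le (h : α → ℝ≥0∞) (a b : ℝ≥0∞) :
    ∫⁻ x, max (h x) (a + b) ∂μ ≤ ∫⁻ x, max (h x) a ∂μ + b * μ Set.univ :=
  calc ∫⁻ x, max (h x) (a + b) ∂μ ≤ ∫⁻ x, (max (h x) a + b) ∂μ :=
        lintegral_mono fun x => max_le (le_add_right (le_max_left _ _))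
          (add_le_add_left (le_max_right _ _) _)
    _ = ∫⁻ x, max (h x) a ∂μ + b * μ Set.univ := by
        rw [lintegral_add_right _ measurable_const, lintegral_const]

lemma continuous_lintegral_max_coe [IsFiniteMeasure μ] (h : α → ℝ≥0∞) :
    Continuous fun c : ℝ≥0 => ∫⁻ x, max (h x) c ∂μ := by
  refine continuous_of_le_add_edist (μ Set.univ) (measure_ne_top μ _) fun t u => ?_
  have htu : (t : ℝ≥0∞) ≤ u + edist t u := by
    rw [edist_nndist, NNReal.nndist_eq, ← ENNReal.coe_add]
    exact ENNReal.coe_le_coe.2 (le_add_tsub.trans (by gcongr; exact le_max_left _ _))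
  rw [mul_comm]
  exact (lintegral_mono fun x => max_le_max le_rfl htu).trans (lintegral_max_add_le h _ _)

theorem exists_lintegral_max_coe_eq_one [IsProbabilityMeasure μ] {h : α → ℝ≥0∞}
    (hh : ∫⁻ x, h x ∂μ ≤ 1) : ∃ c : ℝ≥0, ∫⁻ x, max (h x) c ∂μ = 1 := by
  have h_zero : ∫⁻ x, max (h x) ((0 : ℝ≥0) : ℝ≥0∞) ∂μ ≤ 1 := by simpa using hh
  have h_one : 1 ≤ ∫⁻ x, max (h x) ((1 : ℝ≥0) : ℝ≥0∞) ∂μ :=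
    calc (1 : ℝ≥0∞) = ∫⁻ _, 1 ∂μ := by simp
      _ ≤ _ := lintegral_mono fun x => by simp
  obtain ⟨c, -, hc⟩ := intermediate_value_Icc zero_le_one
    (continuous_lintegral_max_coe (μ := μ) h).continuousOn ⟨h_zero, h_one⟩
  exact ⟨c, hc⟩

end MeasureTheory

theorem Monotone.leftLim_ae_eq {α β : Type*} [LinearOrder α] [TopologicalSpace α]
    [OrderTopology α] [MeasurableSpace α] {μ : Measure α} [NullSingletonClass μ]
    [ConditionallyCompleteLinearOrder β] [TopologicalSpace β] [OrderTopology β]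
    [SecondCountableTopology β] {f : α → β} (hf : Monotone f) :
    Function.leftLim f =ᵐ[μ] f := by
  refine measure_mono_null (fun x hx => ?_) (hf.countable_not_continuousAt.measure_zero μ)
  exact fun hcont => hx (hf.continuousWithinAt_Iio_iff_leftLim_eq.1 hcont.continuousWithinAt)

/-- Every calibrator is dominated by an admissible calibrator: if
`f : [0,1] → [0,∞]` is increasing with `∫₀¹ (1/f(x)) dx ≤ 1`, then there is an
increasing function `g : [0,1] → [0,∞]` with `g ≤ f` on `[0,1]`, `g` left-continuous,
and `∫₀¹ (1/g(x)) dx = 1`. -/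
theorem calibrator_dominated_by_admissible
    (f : ℝ → ℝ≥0∞)
    (hmono : MonotoneOn f (Set.Icc (0 : ℝ) 1))
    (hint : ∫⁻ x in Set.Icc (0 : ℝ) 1, (f x)⁻¹ ≤ 1) :
    ∃ g : ℝ → ℝ≥0∞,
      MonotoneOn g (Set.Icc (0 : ℝ) 1) ∧
      (∀ x ∈ Set.Icc (0 : ℝ) 1, g x ≤ f x) ∧
      (∀ x ∈ Set.Icc (0 : ℝ) 1, Tendsto g (nhdsWithin x (Set.Ico 0 x)) (𝓝 (g x))) ∧
      ∫⁻ x in Set.Icc (0 : ℝ) 1, (g x)⁻¹ = 1 := by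
  set f' : ℝ → ℝ≥0∞ := fun x => f (Set.projIcc 0 1 zero_le_one x)
  have hf' : Monotone f' := fun x y hxy =>
    hmono (Set.projIcc _ _ _ _).2 (Set.projIcc _ _ _ _).2 (Set.monotone_projIcc _ hxy)
  have hf'_eq : Set.EqOn f' f (Set.Icc 0 1) := fun x hx => by
    simp only [f', Set.projIcc_of_mem _ hx]
  set F := Function.leftLim f'
  have hF_int : ∫⁻ x in Set.Icc (0 : ℝ) 1, (F x)⁻¹ ≤ 1 :=
    calc ∫⁻ x in Set.Icc (0 : ℝ) 1, (F x)⁻¹ = ∫⁻ x in Set.Icc (0 : ℝ) 1, (f' x)⁻¹ :=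
          lintegral_congr_ae (hf'.leftLim_ae_eq.mono fun x hx => by simp only [F, hx])
      _ = ∫⁻ x in Set.Icc (0 : ℝ) 1, (f x)⁻¹ :=
          setLIntegral_congr_fun measurableSet_Icc fun x hx => by rw [hf'_eq hx]
      _ ≤ 1 := hint
  have : IsProbabilityMeasure (volume.restrict (Set.Icc (0 : ℝ) 1)) := ⟨by simp⟩
  obtain ⟨c, hc⟩ := exists_lintegral_max_coe_eq_one hF_int
  refine ⟨fun x => min (F x) (c : ℝ≥0∞)⁻¹, ?_, ?_, ?_, ?_⟩
  · exact fun x _ y _ hxy => min_le_min_right _ (hf'.leftLim hxy)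
  · exact fun x hx => (min_le_left _ _).trans ((hf'.leftLim_le le_rfl).trans_eq (hf'_eq hx))
  · exact fun x _ => ((continuousWithinAt_leftLim_Iic (hf'.tendsto_leftLim x)).mono
      (Set.Ico_subset_Iio_self.trans Set.Iio_subset_Iic_self)).tendsto.min tendsto_const_nhds
  · rw [← hc]
    exact lintegral_congr fun x => by
      rw [ENNReal.inv_strictAnti.antitone.map_min, inv_inv]
end

section
/- For every α ∈ (0,1), the function f(x) := x^{1−α}/α is a calibrator: for every probability space (Ω, F, P) and every p-test p on it, ∫ α · p^{α−1} dP ≤ 1. -/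
open MeasureTheory ENNReal

/-! The derivative of `x ↦ -α x^(α-1)` is `α(1-α) x^(α-2)`, so
`α x^(α-1) = α + ∫_x^1 α(1-α) t^(α-2) dt` for `x ∈ (0,1]`. Integrating over `ω` with `x = p ω` and
swapping the integrals (Tonelli), the inner integral becomes `α(1-α) t^(α-2) P{p ≤ t}`, which the
p-test property bounds by `α(1-α) t^(α-1)`; this integrates to `1-α` over `(0,1]`. -/

section PTest

variable {Ω : Type*} {m : MeasurableSpace Ω}

/-- The defining tail bound of a p-test; measurability and the range `[0,1]` are kept separate. -/
def IsPTest (P : Measure Ω) (p : Ω → ℝ) : Prop :=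
  ∀ δ ∈ Set.Icc (0 : ℝ) 1, P {ω | p ω ≤ δ} ≤ ENNReal.ofReal δ

theorem IsPTest.ae_pos {P : Measure Ω} {p : Ω → ℝ} (hp : IsPTest P p) : ∀ᵐ ω ∂P, 0 < p ω := by
  have hnull : P {ω | p ω ≤ 0} = 0 := by
    simpa using hp 0 ⟨le_rfl, zero_le_one⟩
  simpa [ae_iff, not_lt] using hnull

theorem IsPTest.lintegral_setLIntegral_indicator_le {P : Measure Ω} [SFinite P]
    {p : Ω → ℝ} (hp : IsPTest P p) (hmeas : Measurable p) {F : ℝ → ℝ≥0∞} (hF : Measurable F) :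
    ∫⁻ ω, (∫⁻ t in Set.Ioc (0 : ℝ) 1, (Set.Ici (p ω)).indicator F t) ∂P
      ≤ ∫⁻ t in Set.Ioc 0 1, F t * ENNReal.ofReal t := by
  have hjoint : Measurable (Function.uncurry fun ω t => (Set.Ici (p ω)).indicator F t) := by
    simp only [Function.uncurry_def, Set.indicator_apply, Set.mem_Ici]
    exact Measurable.ite (measurableSet_le (hmeas.comp measurable_fst) measurable_snd)
      (hF.comp measurable_snd) measurable_const
  rw [lintegral_lintegral_swap hjoint.aemeasurable]
  refine setLIntegral_mono' measurableSet_Ioc fun t ht => ?_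
  have hsection :
      (fun ω => (Set.Ici (p ω)).indicator F t) = {ω | p ω ≤ t}.indicator fun _ => F t := by
    ext ω
    simp [Set.indicator_apply]
  rw [hsection, lintegral_indicator_const (measurableSet_le hmeas measurable_const)]
  exact mul_le_mul_right (hp t ⟨ht.1.le, ht.2⟩) _

end PTest

theorem setLIntegral_Ioc_indicator_Ici {F : ℝ → ℝ≥0∞} {x : ℝ} (hx : 0 < x) :
    ∫⁻ t in Set.Ioc (0 : ℝ) 1, (Set.Ici x).indicator F t = ∫⁻ t in Set.Ioc x 1, F t := by
  have hset : Set.Ici x ∩ Set.Ioc 0 1 = Set.Icc x 1 := by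
    ext t
    simp only [Set.mem_inter_iff, Set.mem_Ici, Set.mem_Ioc, Set.mem_Icc]
    constructor
    · rintro ⟨hxt, -, ht1⟩
      exact ⟨hxt, ht1⟩
    · rintro ⟨hxt, ht1⟩
      exact ⟨hxt, hx.trans_le hxt, ht1⟩
  rw [setLIntegral_indicator measurableSet_Ici, hset, Measure.restrict_congr_set Ioc_ae_eq_Icc]

theorem integral_Ioc_mul_rpow_sub_two {α x : ℝ} (hα : α ≠ 1) (hx : 0 < x) (hx1 : x ≤ 1) :
    ∫ t in Set.Ioc x 1, α * (1 - α) * t ^ (α - 2) = α * x ^ (α - 1) - α := by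
  have h0 : (0 : ℝ) ∉ Set.uIcc x 1 := by
    rw [Set.uIcc_of_le hx1]
    exact fun h => h.1.not_gt hx
  rw [← intervalIntegral.integral_of_le hx1, intervalIntegral.integral_const_mul,
    integral_rpow (Or.inr ⟨by contrapose! hα; linarith, h0⟩)]
  have hα' : α - 1 ≠ 0 := sub_ne_zero.2 hα
  rw [show α - 2 + 1 = α - 1 by ring, Real.one_rpow]
  field_simp
  ring

theorem integral_Ioc_zero_one_mul_rpow_sub_one {α : ℝ} (hα : 0 < α) (c : ℝ) :
    ∫ t in Set.Ioc 0 1, c * t ^ (α - 1) = c / α := by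
  rw [← intervalIntegral.integral_of_le zero_le_one, intervalIntegral.integral_const_mul,
    integral_rpow (Or.inl (by linarith)), show α - 1 + 1 = α by ring, Real.one_rpow,
    Real.zero_rpow hα.ne']
  ring

theorem ofReal_mul_rpow_eq_add_setLIntegral {α x : ℝ} (hα : α ∈ Set.Ioo (0 : ℝ) 1)
    (hx : x ∈ Set.Ioc (0 : ℝ) 1) :
    ENNReal.ofReal α * ENNReal.ofReal x ^ (α - 1)
      = ENNReal.ofReal α + ∫⁻ t in Set.Ioc x 1, ENNReal.ofReal (α * (1 - α) * t ^ (α - 2)) := by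
  obtain ⟨hα0, hα1⟩ := hα
  obtain ⟨hx0, hx1⟩ := hx
  have hint : IntegrableOn (fun t => α * (1 - α) * t ^ (α - 2)) (Set.Ioc x 1) :=
    ((intervalIntegral.intervalIntegrable_rpow
      (Or.inr fun h => (Set.uIcc_of_le hx1 ▸ h).1.not_gt hx0)).const_mul _).1
  have hnonneg : 0 ≤ᵐ[volume.restrict (Set.Ioc x 1)] fun t => α * (1 - α) * t ^ (α - 2) := by
    filter_upwards [ae_restrict_mem measurableSet_Ioc] with t ht
    exact mul_nonneg (mul_nonneg hα0.le (by linarith)) (Real.rpow_nonneg (hx0.trans ht.1).le _)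
  have hpow : 1 ≤ x ^ (α - 1) := Real.one_le_rpow_of_pos_of_le_one_of_nonpos hx0 hx1 (by linarith)
  rw [← ofReal_integral_eq_lintegral_ofReal hint hnonneg,
    integral_Ioc_mul_rpow_sub_two hα1.ne hx0 hx1, ← ENNReal.ofReal_add hα0.le (by nlinarith),
    ENNReal.ofReal_rpow_of_pos hx0, ← ENNReal.ofReal_mul hα0.le, add_sub_cancel]

theorem setLIntegral_Ioc_zero_one_ofReal_rpow_sub_two_mul {α : ℝ} (hα : α ∈ Set.Ioo (0 : ℝ) 1) :
    ∫⁻ t in Set.Ioc 0 1, ENNReal.ofReal (α * (1 - α) * t ^ (α - 2)) * ENNReal.ofReal t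
      = ENNReal.ofReal (1 - α) := by
  obtain ⟨hα0, hα1⟩ := hα
  have hc : 0 ≤ α * (1 - α) := mul_nonneg hα0.le (by linarith)
  have hmul : ∀ t ∈ Set.Ioc (0 : ℝ) 1, ENNReal.ofReal (α * (1 - α) * t ^ (α - 2)) * ENNReal.ofReal t
      = ENNReal.ofReal (α * (1 - α) * t ^ (α - 1)) := fun t ht => by
    rw [← ENNReal.ofReal_mul (mul_nonneg hc (Real.rpow_nonneg ht.1.le _)), mul_assoc,
      ← Real.rpow_add_one ht.1.ne']
    ring_nf
  have hint : IntegrableOn (fun t => α * (1 - α) * t ^ (α - 1)) (Set.Ioc 0 1) :=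
    ((intervalIntegral.intervalIntegrable_rpow' (by linarith)).const_mul _).1
  have hnonneg : 0 ≤ᵐ[volume.restrict (Set.Ioc 0 1)] fun t => α * (1 - α) * t ^ (α - 1) := by
    filter_upwards [ae_restrict_mem measurableSet_Ioc] with t ht
    exact mul_nonneg hc (Real.rpow_nonneg ht.1.le _)
  rw [setLIntegral_congr_fun measurableSet_Ioc hmul,
    ← ofReal_integral_eq_lintegral_ofReal hint hnonneg, integral_Ioc_zero_one_mul_rpow_sub_one hα0,
    mul_div_cancel_left₀ _ hα0.ne']

/-- For every `α ∈ (0,1)`, the function `f(x) = x^{1-α}/α` is a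
calibrator: for every probability space `(Ω, F, P)` and every p-test `p` on it,
`∫ α·p^{α-1} dP ≤ 1` (the integrand being read in `[0,∞]`, with value `∞` at `p = 0`). -/
theorem power_function_is_calibrator
    (α : ℝ) (hα : α ∈ Set.Ioo (0 : ℝ) 1)
    {Ω : Type*} {m : MeasurableSpace Ω} (P : Measure Ω) [IsProbabilityMeasure P]
    (p : Ω → ℝ) (hmeas : Measurable p) (h01 : ∀ ω, p ω ∈ Set.Icc (0 : ℝ) 1)
    (hptest : ∀ δ ∈ Set.Icc (0 : ℝ) 1, P {ω | p ω ≤ δ} ≤ ENNReal.ofReal δ) :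
    ∫⁻ ω, ENNReal.ofReal α * (ENNReal.ofReal (p ω)) ^ (α - 1) ∂P ≤ 1 := by
  have hp : IsPTest P p := hptest
  set F : ℝ → ℝ≥0∞ := fun t => ENNReal.ofReal (α * (1 - α) * t ^ (α - 2))
  have hF : Measurable F := by fun_prop
  calc ∫⁻ ω, ENNReal.ofReal α * ENNReal.ofReal (p ω) ^ (α - 1) ∂P
      = ∫⁻ ω, (ENNReal.ofReal α + ∫⁻ t in Set.Ioc (0 : ℝ) 1, (Set.Ici (p ω)).indicator F t) ∂P := by
        refine lintegral_congr_ae ?_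
        filter_upwards [hp.ae_pos] with ω hω
        rw [setLIntegral_Ioc_indicator_Ici hω]
        exact ofReal_mul_rpow_eq_add_setLIntegral hα ⟨hω, (h01 ω).2⟩
    _ = ENNReal.ofReal α + ∫⁻ ω, (∫⁻ t in Set.Ioc (0 : ℝ) 1, (Set.Ici (p ω)).indicator F t) ∂P := by
        rw [lintegral_add_left measurable_const, lintegral_const, measure_univ, mul_one]
    _ ≤ ENNReal.ofReal α + ∫⁻ t in Set.Ioc 0 1, F t * ENNReal.ofReal t := by
        gcongr
        exact hp.lintegral_setLIntegral_indicator_le hmeas hF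
    _ = 1 := by
        rw [setLIntegral_Ioc_zero_one_ofReal_rpow_sub_two_mul hα, ← ENNReal.ofReal_add hα.1.le
          (by linarith [hα.2]), add_sub_cancel, ENNReal.ofReal_one]
end

section
/- Let f : [1,∞) → [0,∞) be an increasing function with ∫₀¹ f(1/x) dx ≤ 1, and let (X_n, F_n)_{n∈ℕ} be a test supermartingale on a probability space (Ω, F, P). Then E[f(X*_∞)] ≤ 1, where X*_∞ := sup_{n∈ℕ} max(X_n, 1). -/
open MeasureTheory ENNReal

open Filter Topology Set

/-! Ville's inequality, obtained by optional stopping at the first time `X` reaches `ε`, gives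
`P(X*_∞ ≥ c) ≤ 1/c`: the running supremum is stochastically dominated by `1/U` with `U` uniform
on `(0,1]`. For increasing `f` the layer-cake formula turns this domination into
`E[f(X*_∞)] ≤ E[f(1/U)] = ∫₀¹ f(1/x) dx`. -/

namespace MeasureTheory.Supermartingale

variable {Ω : Type*} {m : MeasurableSpace Ω} {P : Measure Ω} [IsFiniteMeasure P]
  {ℱ : Filtration ℕ m} {X : ℕ → Ω → ℝ}

theorem ville_ineq_finite_horizon (hX : Supermartingale X ℱ P) (hpos : ∀ n, 0 ≤ᵐ[P] X n)
    (ε : ℝ) (n : ℕ) :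
    ENNReal.ofReal ε * P {ω | ∃ k ≤ n, ε ≤ X k ω} ≤ ENNReal.ofReal (∫ ω, X 0 ω ∂P) := by
  set τ : Ω → WithTop ℕ := fun ω => (hittingBtwn X (Ici ε) 0 n ω : ℕ)
  have hτ : IsStoppingTime ℱ τ :=
    Adapted.isStoppingTime_hittingBtwn hX.stronglyAdapted.adapted measurableSet_Ici
  have hτn : ∀ ω, τ ω ≤ n := fun ω => WithTop.coe_le_coe.2 (hittingBtwn_le ω)
  have hint : Integrable (stoppedValue X τ) P := integrable_stoppedValue ℕ hτ hX.integrable hτn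
  have hsub : {ω | ∃ k ≤ n, ε ≤ X k ω} ⊆
      {ω | ENNReal.ofReal ε ≤ ENNReal.ofReal (stoppedValue X τ ω)} := by
    rintro ω ⟨k, hk, hεk⟩
    exact ENNReal.ofReal_le_ofReal (stoppedValue_hittingBtwn_mem ⟨k, ⟨k.zero_le, hk⟩, hεk⟩)
  have hnonneg : 0 ≤ᵐ[P] stoppedValue X τ := by
    filter_upwards [ae_all_iff.2 hpos] with ω hω using hω _
  have hle : ∫ ω, stoppedValue X τ ω ∂P ≤ ∫ ω, X 0 ω ∂P := by
    have := hX.neg.expected_stoppedValue_mono (isStoppingTime_const ℱ 0) hτ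
      (fun ω => WithTop.coe_le_coe.2 (Nat.zero_le _)) hτn
    simpa [stoppedValue, integral_neg] using this
  calc ENNReal.ofReal ε * P {ω | ∃ k ≤ n, ε ≤ X k ω}
      ≤ ENNReal.ofReal ε * P {ω | ENNReal.ofReal ε ≤ ENNReal.ofReal (stoppedValue X τ ω)} := by
        gcongr
    _ ≤ ∫⁻ ω, ENNReal.ofReal (stoppedValue X τ ω) ∂P :=
        mul_meas_ge_le_lintegral₀ hint.aemeasurable.ennreal_ofReal _
    _ = ENNReal.ofReal (∫ ω, stoppedValue X τ ω ∂P) :=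
        (ofReal_integral_eq_lintegral_ofReal hint hnonneg).symm
    _ ≤ ENNReal.ofReal (∫ ω, X 0 ω ∂P) := ENNReal.ofReal_le_ofReal hle

theorem ville_ineq (hX : Supermartingale X ℱ P) (hpos : ∀ n, 0 ≤ᵐ[P] X n) (ε : ℝ) :
    ENNReal.ofReal ε * P {ω | ∃ n, ε ≤ X n ω} ≤ ENNReal.ofReal (∫ ω, X 0 ω ∂P) := by
  have hunion : {ω | ∃ n, ε ≤ X n ω} = ⋃ n, {ω | ∃ k ≤ n, ε ≤ X k ω} := by
    ext ω
    simp only [mem_ofPred_eq, mem_iUnion]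
    exact ⟨fun ⟨n, hn⟩ => ⟨n, n, le_rfl, hn⟩, fun ⟨_, k, _, hk⟩ => ⟨k, hk⟩⟩
  have hmono : Monotone fun n => {ω | ∃ k ≤ n, ε ≤ X k ω} :=
    fun _ _ hab _ ⟨k, hk, h⟩ => ⟨k, hk.trans hab, h⟩
  rw [hunion, hmono.measure_iUnion, ENNReal.mul_iSup]
  exact iSup_le (hX.ville_ineq_finite_horizon hpos ε)

theorem ae_bddAbove_range (hX : Supermartingale X ℱ P) (hpos : ∀ n, 0 ≤ᵐ[P] X n) :
    ∀ᵐ ω ∂P, BddAbove (range fun n => X n ω) := by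
  set B := {ω | ¬ BddAbove (range fun n => X n ω)}
  have hB : ∀ c : ℝ, ENNReal.ofReal c * P B ≤ ENNReal.ofReal (∫ ω, X 0 ω ∂P) := by
    refine fun c => le_trans ?_ (hX.ville_ineq hpos c)
    gcongr
    intro ω hω
    obtain ⟨_, ⟨n, rfl⟩, hn⟩ := not_bddAbove_iff.1 hω c
    exact ⟨n, hn.le⟩
  suffices P B = 0 from ae_iff.2 this
  by_contra hne
  have hlim : Tendsto (fun c => ENNReal.ofReal c * P B) atTop (𝓝 ⊤) := by
    have := ENNReal.Tendsto.mul_const ENNReal.tendsto_ofReal_atTop (Or.inr (measure_ne_top P B))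
    rwa [ENNReal.top_mul hne] at this
  obtain ⟨c, hc⟩ := (hlim.eventually (lt_mem_nhds ENNReal.ofReal_lt_top)).exists
  exact (hB c).not_gt hc

theorem measure_le_iSup_max_one_le_inv (hX : Supermartingale X ℱ P) (hpos : ∀ n, 0 ≤ᵐ[P] X n)
    (h0 : ∫ ω, X 0 ω ∂P ≤ 1) {c : ℝ} (hc : 1 < c) :
    P {ω | c ≤ ⨆ n, max (X n ω) 1} ≤ ENNReal.ofReal c⁻¹ := by
  have hbound : ∀ c' ∈ Ioo 1 c, P {ω | c ≤ ⨆ n, max (X n ω) 1} ≤ ENNReal.ofReal c'⁻¹ := by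
    intro c' hc'
    have hsub : {ω | c ≤ ⨆ n, max (X n ω) 1} ⊆ {ω | ∃ n, c' ≤ X n ω} := by
      intro ω (hω : c ≤ ⨆ n, max (X n ω) 1)
      have hbdd : BddAbove (range fun n => max (X n ω) 1) := by
        by_contra hnb
        rw [Real.iSup_of_not_bddAbove hnb] at hω
        linarith
      obtain ⟨n, hn⟩ := (lt_ciSup_iff hbdd).1 (hc'.2.trans_le hω)
      exact ⟨n, ((lt_max_iff.1 hn).resolve_right hc'.1.not_gt).le⟩
    have hville : ENNReal.ofReal c' * P {ω | ∃ n, c' ≤ X n ω} ≤ 1 :=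
      (hX.ville_ineq hpos c').trans (ENNReal.ofReal_le_one.2 h0)
    rw [ENNReal.ofReal_inv_of_pos (by linarith [hc'.1])]
    exact (measure_mono hsub).trans (ENNReal.le_inv_iff_mul_le.2 (by rwa [mul_comm]))
  have hlim : Tendsto (fun c' => ENNReal.ofReal c'⁻¹) (𝓝[<] c) (𝓝 (ENNReal.ofReal c⁻¹)) :=
    ((ENNReal.continuous_ofReal.tendsto _).comp
      (tendsto_inv₀ (by linarith : c ≠ 0))).mono_left nhdsWithin_le_nhds
  exact ge_of_tendsto hlim (eventually_of_mem (Ioo_mem_nhdsLT hc) hbound)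

end MeasureTheory.Supermartingale

section InverseUniformDomination

variable {Ω : Type*} {m : MeasurableSpace Ω} {P : Measure Ω} [IsZeroOrProbabilityMeasure P]
  {Y : Ω → ℝ}

theorem measure_preimage_upperSet_le_restrict_Ioc_inv
    (htail : ∀ c, 1 < c → P {ω | c ≤ Y ω} ≤ ENNReal.ofReal c⁻¹) {S : Set ℝ} (hS : IsUpperSet S) :
    P (Y ⁻¹' S) ≤ volume.restrict (Ioc 0 1) ((·⁻¹) ⁻¹' S) := by
  rcases S.eq_empty_or_nonempty with rfl | ⟨s, hs⟩
  · simp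
  have hne : (S ∩ Ici 1).Nonempty := ⟨max s 1, hS (le_max_left s 1) hs, le_max_right s 1⟩
  have hbdd : BddBelow (S ∩ Ici 1) := ⟨1, fun x hx => hx.2⟩
  set c := sInf (S ∩ Ici 1)
  have hc1 : 1 ≤ c := le_csInf hne fun x hx => hx.2
  have hP : P (Y ⁻¹' S) ≤ ENNReal.ofReal c⁻¹ := by
    rcases hc1.eq_or_lt with hc | hc
    · simpa [← hc] using prob_le_one
    calc P (Y ⁻¹' S) ≤ P {ω | c ≤ Y ω} :=
          measure_mono fun ω (hω : Y ω ∈ S) => not_lt.1 fun hlt =>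
            (csInf_le hbdd ⟨hS (le_max_left _ _) hω, le_max_right (Y ω) 1⟩).not_gt (max_lt hlt hc)
      _ ≤ ENNReal.ofReal c⁻¹ := htail c hc
  have hIoo : Ioo 0 c⁻¹ ⊆ Ioc 0 1 :=
    Ioo_subset_Ioc_self.trans (Ioc_subset_Ioc_right (inv_le_one_of_one_le₀ hc1))
  have hmem : Ioo 0 c⁻¹ ⊆ (·⁻¹) ⁻¹' S := by
    intro x hx
    obtain ⟨s, hs, hsx⟩ := exists_lt_of_csInf_lt hne ((lt_inv_comm₀ hx.1 (by linarith)).1 hx.2)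
    exact hS hsx.le hs.1
  calc P (Y ⁻¹' S) ≤ ENNReal.ofReal c⁻¹ := hP
    _ = volume.restrict (Ioc 0 1) (Ioo 0 c⁻¹) := by
      rw [Measure.restrict_apply measurableSet_Ioo, inter_eq_left.2 hIoo, Real.volume_Ioo,
        sub_zero]
    _ ≤ volume.restrict (Ioc 0 1) ((·⁻¹) ⁻¹' S) := measure_mono hmem

theorem lintegral_ofReal_comp_le_setLIntegral_inv (hY : AEMeasurable Y P)
    (htail : ∀ c, 1 < c → P {ω | c ≤ Y ω} ≤ ENNReal.ofReal c⁻¹) {g : ℝ → ℝ} (hg : Monotone g)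
    (hg0 : ∀ x, 0 ≤ g x) :
    ∫⁻ ω, ENNReal.ofReal (g (Y ω)) ∂P ≤ ∫⁻ x in Ioc 0 1, ENNReal.ofReal (g x⁻¹) := by
  rw [lintegral_eq_lintegral_meas_lt P (ae_of_all _ fun ω => hg0 _)
      (hg.measurable.comp_aemeasurable hY),
    lintegral_eq_lintegral_meas_lt _ (ae_of_all _ fun x => hg0 _)
      (hg.measurable.comp measurable_inv).aemeasurable]
  exact lintegral_mono fun t =>
    measure_preimage_upperSet_le_restrict_Ioc_inv (S := {x | t < g x}) htail
      fun _ _ hab (ha : t < _) => ha.trans_le (hg hab)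

end InverseUniformDomination

/-- If `f : [1,∞) → [0,∞)` is increasing with `∫₀¹ f(1/x) dx ≤ 1`
and `(X_n, ℱ_n)` is a test supermartingale, then `E[f(X*_∞)] ≤ 1`, where
`X*_∞ := sup_n max(X_n, 1)`. -/
theorem martingale_calibrator_bounds_sup_expectation
    (f : ℝ → ℝ)
    (hmono : MonotoneOn f (Set.Ici (1 : ℝ)))
    (hnonneg : ∀ x ∈ Set.Ici (1 : ℝ), 0 ≤ f x)
    (hint : ∫⁻ x in Set.Ioc (0 : ℝ) 1, ENNReal.ofReal (f x⁻¹) ≤ 1)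
    {Ω : Type*} {m : MeasurableSpace Ω} {P : Measure Ω} [IsProbabilityMeasure P]
    {ℱ : Filtration ℕ m} {X : ℕ → Ω → ℝ}
    (hX : Supermartingale X ℱ P)
    (hpos : ∀ n, 0 ≤ᵐ[P] X n)
    (h0 : ∫ ω, X 0 ω ∂P ≤ 1) :
    ∫⁻ ω, ENNReal.ofReal (f (⨆ n, max (X n ω) 1)) ∂P ≤ 1 := by
  set Y : Ω → ℝ := fun ω => ⨆ n, max (X n ω) 1
  set g : ℝ → ℝ := fun x => f (max x 1)
  have hg : Monotone g := fun x y hxy =>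
    hmono (le_max_right x 1) (le_max_right y 1) (max_le_max_right 1 hxy)
  have hY : Measurable Y := Measurable.iSup fun n =>
    ((hX.stronglyAdapted n).measurable.le (ℱ.le n)).max measurable_const
  -- an unbounded `⨆` is `0` in `ℝ`, outside the domain of `f`
  have hgY : ∀ᵐ ω ∂P, g (Y ω) = f (Y ω) := by
    filter_upwards [hX.ae_bddAbove_range hpos] with ω ⟨M, hM⟩
    have hbdd : BddAbove (range fun n => max (X n ω) 1) :=
      ⟨max M 1, forall_mem_range.2 fun n => max_le_max_right 1 (hM (mem_range_self n))⟩
    exact congrArg f (max_eq_left ((le_max_right (X 0 ω) 1).trans (le_ciSup hbdd 0)))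
  calc ∫⁻ ω, ENNReal.ofReal (f (Y ω)) ∂P = ∫⁻ ω, ENNReal.ofReal (g (Y ω)) ∂P :=
        lintegral_congr_ae (hgY.mono fun ω h => congrArg ENNReal.ofReal h.symm)
    _ ≤ ∫⁻ x in Ioc 0 1, ENNReal.ofReal (g x⁻¹) :=
        lintegral_ofReal_comp_le_setLIntegral_inv hY.aemeasurable
          (fun _ hc => hX.measure_le_iSup_max_one_le_inv hpos h0 hc) hg
          (fun x => hnonneg _ (le_max_right x 1))
    _ = ∫⁻ x in Ioc 0 1, ENNReal.ofReal (f x⁻¹) :=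
        setLIntegral_congr_fun measurableSet_Ioc fun x hx =>
          congrArg (ENNReal.ofReal ∘ f) (max_eq_left ((one_le_inv₀ hx.1).2 hx.2))
    _ ≤ 1 := hint
end

section
/- Let f : [1,∞) → [0,∞) be an increasing function with ∫₀¹ f(1/x) dx ≤ 1. Then f is a martingale calibrator: for every probability space (Ω, F, P) with filtration (F_n)_{n∈ℕ} and every test supermartingale (X_n, F_n), there exists a test supermartingale (Y_n, F_n) such that Y_n ≥ f(X*_n) for all n almost surely, where X*_n := max(1, max_{m ≤ n} X_m). -/
open MeasureTheory ENNReal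

/-!
With `g x := f (max 1 x)` and `J y := ∫₀^{1/y} g (1/u) du`, bet the stake `G y := J y - g y / y`
on the increment of `X` while its running maximum `X*` equals `y`. Formally
`G s = ∫_{(s,∞)} dg(t) / t`: the strategies "hold `1/t` units of `X`" for the levels `t` not yet
reached, mixed according to `dg`. Monotonicity of `g` and `J 1 ≤ 1` give `0 ≤ G ≤ 1`, so the
capital `Y n = 1 - G 1 + G 1 * X 0 + ∑_{k<n} G (X*_k) (X (k+1) - X k)` is a test supermartingale.
The potential `g s + x * G s` moves exactly like `Y` while `X` stays below its running maximum `s`,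
and cannot increase when the maximum jumps from `y` to `x`: the integral of `g (1/u)` over
`[1/x, 1/y]` is at least `g y * (1/y - 1/x)`, which rearranges to `g x + x G x ≤ g y + x G y`.
-/

open Finset Set

noncomputable section

def runningMax (x : ℕ → ℝ) (n : ℕ) : ℝ := max 1 (⨆ i : Fin (n + 1), x i)

lemma one_le_runningMax (x : ℕ → ℝ) (n : ℕ) : 1 ≤ runningMax x n := le_max_left _ _

lemma runningMax_zero (x : ℕ → ℝ) : runningMax x 0 = max 1 (x 0) := by
  simp [runningMax]

lemma runningMax_succ (x : ℕ → ℝ) (n : ℕ) :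
    runningMax x (n + 1) = max (runningMax x n) (x (n + 1)) := by
  have hsup : (⨆ i : Fin (n + 2), x i) = max (⨆ i : Fin (n + 1), x i) (x (n + 1)) :=
    le_antisymm
      (ciSup_le fun i => Fin.lastCases (le_max_right _ _)
        (fun j => le_max_of_le_left (Finite.le_ciSup (fun i : Fin (n + 1) => x i) j)) i)
      (max_le (ciSup_le fun j => Finite.le_ciSup (fun i : Fin (n + 2) => x i) j.castSucc)
        (Finite.le_ciSup (fun i : Fin (n + 2) => x i) (Fin.last _)))
  rw [runningMax, runningMax, hsup, max_assoc]

theorem potential_runningMax_le {φ G : ℝ → ℝ}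
    (hjump : ∀ ⦃y x⦄, 1 ≤ y → y ≤ x → φ x + x * G x ≤ φ y + x * G y) (x : ℕ → ℝ) (n : ℕ) :
    φ (runningMax x n) + x n * G (runningMax x n) ≤
      φ 1 + x 0 * G 1 + ∑ k ∈ range n, G (runningMax x k) * (x (k + 1) - x k) := by
  induction n with
  | zero =>
    rw [runningMax_zero, sum_range_zero, add_zero]
    rcases le_total (x 0) 1 with h | h
    · rw [max_eq_left h]
    · rw [max_eq_right h]
      exact hjump le_rfl h
  | succ n ih =>
    rw [runningMax_succ, sum_range_succ]
    rcases le_total (x (n + 1)) (runningMax x n) with h | h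
    · rw [max_eq_left h]
      linarith
    · rw [max_eq_right h]
      linarith [hjump (one_le_runningMax x n) h]

theorem MeasureTheory.StronglyAdapted.runningMax {Ω : Type*} {m : MeasurableSpace Ω}
    {ℱ : Filtration ℕ m} {X : ℕ → Ω → ℝ} (hX : StronglyAdapted ℱ X) :
    StronglyAdapted ℱ fun n ω => runningMax (X · ω) n := fun n =>
  (measurable_const.max (Measurable.iSup fun i : Fin (n + 1) =>
    ((hX i).mono (ℱ.mono (Nat.lt_succ_iff.mp i.2))).measurable)).stronglyMeasurable

theorem MeasureTheory.Supermartingale.sum_mul_sub {Ω : Type*} {m : MeasurableSpace Ω}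
    {μ : Measure Ω} [IsFiniteMeasure μ] {ℱ : Filtration ℕ m} {R : ℝ} {ξ X : ℕ → Ω → ℝ}
    (hX : Supermartingale X ℱ μ) (hξ : StronglyAdapted ℱ ξ) (hbdd : ∀ n ω, ξ n ω ≤ R)
    (hnonneg : ∀ n ω, 0 ≤ ξ n ω) :
    Supermartingale (fun n => ∑ k ∈ range n, ξ k * (X (k + 1) - X k)) ℱ μ := by
  have hneg : (fun n => ∑ k ∈ range n, ξ k * (X (k + 1) - X k)) =
      -fun n => ∑ k ∈ range n, ξ k * ((-X) (k + 1) - (-X) k) := by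
    funext n
    simp only [Pi.neg_apply, ← sum_neg_distrib, neg_sub_neg, mul_sub, neg_sub]
  rw [hneg]
  exact (hX.neg.sum_mul_sub hξ hbdd hnonneg).neg

/-- Clamping `y` to `[1, ∞)` makes `tailIntegral g` antitone, hence measurable, on all of `ℝ`. -/
def tailIntegral (g : ℝ → ℝ) (y : ℝ) : ℝ := ∫ u in 0..(max 1 y)⁻¹, g u⁻¹

def stake (g : ℝ → ℝ) (y : ℝ) : ℝ := tailIntegral g y - g y / max 1 y

section Stake

variable {g : ℝ → ℝ}

lemma inv_mem_Icc_of_one_le {y : ℝ} (hy : 1 ≤ y) : y⁻¹ ∈ Icc (0 : ℝ) 1 :=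
  ⟨inv_nonneg.mpr (zero_le_one.trans hy), inv_le_one_of_one_le₀ hy⟩

lemma intervalIntegrable_inv_of_mem (hgi : IntervalIntegrable (fun u => g u⁻¹) volume 0 1)
    {a b : ℝ} (ha : a ∈ Icc (0 : ℝ) 1) (hb : b ∈ Icc (0 : ℝ) 1) :
    IntervalIntegrable (fun u => g u⁻¹) volume a b :=
  hgi.mono_set (uIcc_subset_uIcc (Icc_subset_uIcc ha) (Icc_subset_uIcc hb))

lemma tailIntegral_of_one_le {y : ℝ} (hy : 1 ≤ y) : tailIntegral g y = ∫ u in 0..y⁻¹, g u⁻¹ := by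
  rw [tailIntegral, max_eq_right hy]

lemma stake_of_one_le {y : ℝ} (hy : 1 ≤ y) :
    stake g y = (∫ u in 0..y⁻¹, g u⁻¹) - g y / y := by
  rw [stake, tailIntegral_of_one_le hy, max_eq_right hy]

lemma stake_one : stake g 1 = (∫ u in 0..1, g u⁻¹) - g 1 := by
  simp [stake_of_one_le le_rfl]

lemma mul_le_integral_inv (hg : Monotone g) {a b y : ℝ} (hy : 0 < y) (ha : 0 ≤ a) (hab : a ≤ b)
    (hby : b ≤ y⁻¹) (hi : IntervalIntegrable (fun u => g u⁻¹) volume a b) :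
    (b - a) * g y ≤ ∫ u in a..b, g u⁻¹ := by
  calc (b - a) * g y = ∫ _ in a..b, g y := by rw [intervalIntegral.integral_const, smul_eq_mul]
    _ ≤ ∫ u in a..b, g u⁻¹ :=
      intervalIntegral.integral_mono_on_of_le_Ioo hab intervalIntegrable_const hi fun u hu =>
        hg ((le_inv_comm₀ (ha.trans_lt hu.1) hy).mp (hu.2.le.trans hby))

theorem stake_jump_le (hg : Monotone g) (hgi : IntervalIntegrable (fun u => g u⁻¹) volume 0 1)
    {x y : ℝ} (hy : 1 ≤ y) (hyx : y ≤ x) : g x + x * stake g x ≤ g y + x * stake g y := by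
  have hy0 : 0 < y := zero_lt_one.trans_le hy
  have hx0 : 0 < x := hy0.trans_le hyx
  have hx := inv_mem_Icc_of_one_le (hy.trans hyx)
  have hy' := inv_mem_Icc_of_one_le hy
  have hdiff : (∫ u in 0..y⁻¹, g u⁻¹) - ∫ u in 0..x⁻¹, g u⁻¹ = ∫ u in x⁻¹..y⁻¹, g u⁻¹ :=
    intervalIntegral.integral_interval_sub_left
      (intervalIntegrable_inv_of_mem hgi ⟨le_rfl, zero_le_one⟩ hy')
      (intervalIntegrable_inv_of_mem hgi ⟨le_rfl, zero_le_one⟩ hx)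
  have hlow := mul_le_integral_inv hg hy0 hx.1 (inv_anti₀ hy0 hyx) le_rfl
    (intervalIntegrable_inv_of_mem hgi hx hy')
  have hscaled := mul_le_mul_of_nonneg_left hlow hx0.le
  rw [← hdiff] at hscaled
  rw [stake_of_one_le hy, stake_of_one_le (hy.trans hyx)]
  have e1 : x * ((y⁻¹ - x⁻¹) * g y) = x * (g y / y) - g y := by field_simp
  have e2 : x * (g x / x) = g x := by field_simp
  linarith

lemma stake_nonneg (hg : Monotone g) (hgi : IntervalIntegrable (fun u => g u⁻¹) volume 0 1)
    {y : ℝ} (hy : 1 ≤ y) : 0 ≤ stake g y := by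
  have hy0 : 0 < y := zero_lt_one.trans_le hy
  have h := mul_le_integral_inv hg hy0 le_rfl (inv_nonneg.mpr hy0.le) le_rfl
    (intervalIntegrable_inv_of_mem hgi ⟨le_rfl, zero_le_one⟩ (inv_mem_Icc_of_one_le hy))
  rw [sub_zero] at h
  rw [stake_of_one_le hy, div_eq_inv_mul]
  linarith

lemma tailIntegral_antitone (hg0 : ∀ x, 0 ≤ g x)
    (hgi : IntervalIntegrable (fun u => g u⁻¹) volume 0 1) : Antitone (tailIntegral g) :=
  fun a b hab => intervalIntegral.integral_mono_interval le_rfl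
    (inv_nonneg.mpr (zero_le_one.trans (le_max_left 1 b)))
    (inv_anti₀ (zero_lt_one.trans_le (le_max_left 1 a)) (max_le_max le_rfl hab))
    (Filter.Eventually.of_forall fun u => hg0 u⁻¹)
    (intervalIntegrable_inv_of_mem hgi ⟨le_rfl, zero_le_one⟩
      (inv_mem_Icc_of_one_le (le_max_left 1 a)))

lemma stake_le_one (hg0 : ∀ x, 0 ≤ g x) (hgi : IntervalIntegrable (fun u => g u⁻¹) volume 0 1)
    (hJ : ∫ u in 0..1, g u⁻¹ ≤ 1) {y : ℝ} (hy : 1 ≤ y) : stake g y ≤ 1 := by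
  have hJy : tailIntegral g y ≤ tailIntegral g 1 := tailIntegral_antitone hg0 hgi hy
  have hJ1 : tailIntegral g 1 = ∫ u in 0..1, g u⁻¹ := by simp [tailIntegral_of_one_le le_rfl]
  have hdiv : 0 ≤ g y / max 1 y := div_nonneg (hg0 y) (zero_le_one.trans (le_max_left 1 y))
  rw [stake]
  linarith

lemma measurable_stake (hg : Monotone g) (hg0 : ∀ x, 0 ≤ g x)
    (hgi : IntervalIntegrable (fun u => g u⁻¹) volume 0 1) : Measurable (stake g) :=
  (tailIntegral_antitone hg0 hgi).measurable.sub
    (hg.measurable.div (measurable_const.max measurable_id))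

end Stake

section Extension

variable {f : ℝ → ℝ}

lemma monotone_comp_max_one (hmono : MonotoneOn f (Ici 1)) : Monotone fun x => f (max 1 x) :=
  fun a b hab => hmono (le_max_left 1 a) (le_max_left 1 b) (max_le_max le_rfl hab)

lemma intervalIntegrable_and_integral_le_one (hmono : MonotoneOn f (Ici 1))
    (hnonneg : ∀ x ∈ Ici (1 : ℝ), 0 ≤ f x)
    (hint : ∫⁻ x in Ioc (0 : ℝ) 1, ENNReal.ofReal (f x⁻¹) ≤ 1) :
    IntervalIntegrable (fun u => f (max 1 u⁻¹)) volume 0 1 ∧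
      ∫ u in 0..1, f (max 1 u⁻¹) ≤ 1 := by
  have hmeas : AEStronglyMeasurable (fun u : ℝ => f (max 1 u⁻¹)) (volume.restrict (Ioc 0 1)) :=
    ((monotone_comp_max_one hmono).measurable.comp measurable_inv).aestronglyMeasurable
  have hpos : 0 ≤ᵐ[volume.restrict (Ioc 0 1)] fun u : ℝ => f (max 1 u⁻¹) :=
    Filter.Eventually.of_forall fun u => hnonneg _ (le_max_left 1 u⁻¹)
  have hlint : ∫⁻ u in Ioc (0 : ℝ) 1, ENNReal.ofReal (f (max 1 u⁻¹)) ≤ 1 := by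
    refine le_of_eq_of_le (setLIntegral_congr_fun measurableSet_Ioc fun u hu => ?_) hint
    rw [max_eq_right ((one_le_inv₀ hu.1).mpr hu.2)]
  refine ⟨(intervalIntegrable_iff_integrableOn_Ioc_of_le zero_le_one).mpr
    ⟨hmeas, (hasFiniteIntegral_iff_ofReal hpos).mpr (hlint.trans_lt one_lt_top)⟩, ?_⟩
  rw [intervalIntegral.integral_of_le zero_le_one, integral_eq_lintegral_of_nonneg_ae hpos hmeas]
  exact toReal_le_of_le_ofReal zero_le_one (ofReal_one ▸ hlint)

end Extension

section Calibration

variable {Ω : Type*} {m : MeasurableSpace Ω} {P : Measure Ω} {ℱ : Filtration ℕ m}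
  {X : ℕ → Ω → ℝ} {g : ℝ → ℝ}

def calibratedProcess (g : ℝ → ℝ) (X : ℕ → Ω → ℝ) (n : ℕ) (ω : Ω) : ℝ :=
  1 - stake g 1 + stake g 1 * X 0 ω +
    ∑ k ∈ range n, stake g (runningMax (X · ω) k) * (X (k + 1) ω - X k ω)

theorem supermartingale_calibratedProcess [IsFiniteMeasure P] (hg : Monotone g)
    (hg0 : ∀ x, 0 ≤ g x) (hgi : IntervalIntegrable (fun u => g u⁻¹) volume 0 1)
    (hJ : ∫ u in 0..1, g u⁻¹ ≤ 1) (hX : Supermartingale X ℱ P) :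
    Supermartingale (calibratedProcess g X) ℱ P := by
  set ξ : ℕ → Ω → ℝ := fun k ω => stake g (runningMax (X · ω) k)
  have hξ : StronglyAdapted ℱ ξ := fun n =>
    ((measurable_stake hg hg0 hgi).comp
      (hX.stronglyAdapted.runningMax n).measurable).stronglyMeasurable
  have hsplit : calibratedProcess g X = (fun _ ω => 1 - stake g 1 + stake g 1 * X 0 ω) +
      fun n => ∑ k ∈ range n, ξ k * (X (k + 1) - X k) := by
    funext n ω
    simp only [calibratedProcess, Pi.add_apply, Finset.sum_apply, Pi.mul_apply, Pi.sub_apply, ξ]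
  rw [hsplit]
  refine (martingale_const_fun ℱ P ?_ ?_).supermartingale.add
    (hX.sum_mul_sub hξ (fun n ω => stake_le_one hg0 hgi hJ (one_le_runningMax _ n))
      fun n ω => stake_nonneg hg hgi (one_le_runningMax _ n))
  · exact stronglyMeasurable_const.add ((hX.stronglyAdapted 0).const_mul _)
  · exact (integrable_const _).add ((hX.integrable 0).const_mul _)

theorem integral_calibratedProcess_zero_le_one [IsProbabilityMeasure P] (hg : Monotone g)
    (hgi : IntervalIntegrable (fun u => g u⁻¹) volume 0 1) (hX0 : Integrable (X 0) P)
    (h0 : ∫ ω, X 0 ω ∂P ≤ 1) : ∫ ω, calibratedProcess g X 0 ω ∂P ≤ 1 := by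
  have ha := stake_nonneg hg hgi le_rfl
  simp only [calibratedProcess, sum_range_zero, add_zero]
  rw [integral_add (integrable_const _) (hX0.const_mul _), integral_const_mul, integral_const,
    probReal_univ, one_smul]
  nlinarith

lemma potential_le_calibratedProcess (hg : Monotone g)
    (hgi : IntervalIntegrable (fun u => g u⁻¹) volume 0 1) (ω : Ω) (n : ℕ) :
    g (runningMax (X · ω) n) + X n ω * stake g (runningMax (X · ω) n) +
      (1 - ∫ u in 0..1, g u⁻¹) ≤ calibratedProcess g X n ω := by
  have h := potential_runningMax_le (fun _ _ => stake_jump_le hg hgi) (X · ω) n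
  rw [stake_one] at h
  rw [calibratedProcess, stake_one]
  linarith

lemma apply_runningMax_le_calibratedProcess (hg : Monotone g)
    (hgi : IntervalIntegrable (fun u => g u⁻¹) volume 0 1) (hJ : ∫ u in 0..1, g u⁻¹ ≤ 1)
    {ω : Ω} {n : ℕ} (hXn : 0 ≤ X n ω) : g (runningMax (X · ω) n) ≤ calibratedProcess g X n ω := by
  have := potential_le_calibratedProcess hg hgi (X := X) ω n
  have := mul_nonneg hXn (stake_nonneg hg hgi (one_le_runningMax (X · ω) n))
  linarith

end Calibration

end

/-- If `f : [1,∞) → [0,∞)` is increasing with `∫₀¹ f(1/x) dx ≤ 1`,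
then `f` is a martingale calibrator: for every probability space with filtration
`(ℱ_n)` and every test supermartingale `(X_n, ℱ_n)`, there is a test supermartingale
`(Y_n, ℱ_n)` with `Y_n ≥ f(X*_n)` for all `n` almost surely, where
`X*_n := max(1, max_{m ≤ n} X_m)`. -/
theorem increasing_with_small_integral_is_martingale_calibrator
    (f : ℝ → ℝ)
    (hmono : MonotoneOn f (Set.Ici (1 : ℝ)))
    (hnonneg : ∀ x ∈ Set.Ici (1 : ℝ), 0 ≤ f x)
    (hint : ∫⁻ x in Set.Ioc (0 : ℝ) 1, ENNReal.ofReal (f x⁻¹) ≤ 1)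
    {Ω : Type*} {m : MeasurableSpace Ω} {P : Measure Ω} [IsProbabilityMeasure P]
    {ℱ : Filtration ℕ m} {X : ℕ → Ω → ℝ}
    (hX : Supermartingale X ℱ P)
    (hpos : ∀ n, 0 ≤ᵐ[P] X n)
    (h0 : ∫ ω, X 0 ω ∂P ≤ 1) :
    ∃ Y : ℕ → Ω → ℝ,
      Supermartingale Y ℱ P ∧
      (∀ n, 0 ≤ᵐ[P] Y n) ∧
      (∫ ω, Y 0 ω ∂P ≤ 1) ∧
      (∀ᵐ ω ∂P, ∀ n, f (max 1 (⨆ i : Fin (n + 1), X i ω)) ≤ Y n ω) := by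
  set g : ℝ → ℝ := fun x => f (max 1 x)
  have hg : Monotone g := monotone_comp_max_one hmono
  have hg0 : ∀ x, 0 ≤ g x := fun x => hnonneg _ (le_max_left 1 x)
  obtain ⟨hgi, hJ⟩ := intervalIntegrable_and_integral_le_one hmono hnonneg hint
  have hle : ∀ᵐ ω ∂P, ∀ n, g (runningMax (X · ω) n) ≤ calibratedProcess g X n ω := by
    filter_upwards [ae_all_iff.mpr hpos] with ω hω n
    exact apply_runningMax_le_calibratedProcess hg hgi hJ (hω n)
  refine ⟨calibratedProcess g X, supermartingale_calibratedProcess hg hg0 hgi hJ hX,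
    fun n => ?_, integral_calibratedProcess_zero_le_one hg hgi (hX.integrable 0) h0, ?_⟩
  · filter_upwards [hle] with ω hω
    exact (hg0 _).trans (hω n)
  · filter_upwards [hle] with ω hω n
    exact (congrArg f (max_eq_right (one_le_runningMax _ n))).symm.le.trans (hω n)
end

section
/- Let f : [1,∞) → [0,∞) be an increasing function that is a martingale calibrator: for every probability space with filtration (F_n)_{n∈ℕ} and every test martingale (X_n, F_n), there exists a test supermartingale (Y_n, F_n) with Y_n ≥ f(X*_n) for all n almost surely, where X*_n := max(1, max_{m ≤ n} X_m). Then ∫₀¹ f(1/x) dx ≤ 1. -/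
/-!
Fix `0 < r < 1` and run the test martingale `X_n = r⁻ⁿ 𝟙_{(0, rⁿ]}` on `(0, 1]` with Lebesgue
measure and the filtration generated by the intervals `(0, rᵏ]`. If `rᵏ⁺¹ < ω ≤ rᵏ` with `k ≤ n`,
then `X_k(ω) = r⁻ᵏ ≥ r / ω`, so the running maximum satisfies `X*_n(ω) ≥ min (r⁻ⁿ) (r / ω)`.
Dominating `f(X*_n)` by a test supermartingale bounds `∫₀¹ f(max 1 (min (r⁻ⁿ) (r / x))) dx`
by `1`, and monotone convergence in `n` gives `∫₀¹ f(max 1 (r / x)) dx ≤ 1`. The substitution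
`x ↦ r x` turns this into `r ∫₀¹ f(1 / x) dx ≤ 1`, and `r → 1` concludes.
-/

open MeasureTheory ENNReal

namespace MeasureTheory

variable {Ω : Type*} [mΩ : MeasurableSpace Ω] {A : ℕ → Set Ω} {n : ℕ}

def Filtration.ofSets (A : ℕ → Set Ω) (hA : ∀ n, MeasurableSet (A n)) : Filtration ℕ mΩ where
  seq n := MeasurableSpace.generateFrom (A '' Set.Iic n)
  mono' _ _ hij := MeasurableSpace.generateFrom_mono (Set.image_mono (Set.Iic_subset_Iic.2 hij))
  le' _ := MeasurableSpace.generateFrom_le (by rintro _ ⟨k, -, rfl⟩; exact hA k)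

lemma Filtration.measurableSet_ofSets (hA : ∀ n, MeasurableSet (A n)) {k n : ℕ} (hkn : k ≤ n) :
    MeasurableSet[Filtration.ofSets A hA n] (A k) :=
  MeasurableSpace.measurableSet_generateFrom ⟨k, hkn, rfl⟩

lemma Filtration.subset_or_disjoint_of_measurableSet_ofSets (hA : ∀ n, MeasurableSet (A n))
    (hanti : Antitone A) {s : Set Ω} (hs : MeasurableSet[Filtration.ofSets A hA n] s) :
    A n ⊆ s ∨ Disjoint (A n) s := by
  induction hs with
  | basic t ht =>
    obtain ⟨k, hk, rfl⟩ := ht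
    exact Or.inl (hanti hk)
  | empty => exact Or.inr (Set.disjoint_empty _)
  | compl t _ ih =>
    rcases ih with h | h
    · exact Or.inr (Set.disjoint_compl_right_iff_subset.2 h)
    · exact Or.inl (Set.subset_compl_iff_disjoint_right.2 h)
  | iUnion g _ ih =>
    by_cases h : ∃ i, A n ⊆ g i
    · obtain ⟨i, hi⟩ := h
      exact Or.inl (hi.trans (Set.subset_iUnion g i))
    · simp only [not_exists] at h
      exact Or.inr (Set.disjoint_iUnion_right.2 fun i => (ih i).resolve_left (h i))

noncomputable def normalizedIndicator (P : Measure Ω) (A : ℕ → Set Ω) (n : ℕ) : Ω → ℝ :=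
  (A n).indicator fun _ => (P.real (A n))⁻¹

variable {P : Measure Ω}

lemma normalizedIndicator_nonneg (n : ℕ) : 0 ≤ normalizedIndicator P A n :=
  Set.indicator_nonneg (fun _ _ => inv_nonneg.2 measureReal_nonneg)

lemma setIntegral_normalizedIndicator (hA : MeasurableSet (A n)) {s : Set Ω} :
    ∫ ω in s, normalizedIndicator P A n ω ∂P = P.real (s ∩ A n) / P.real (A n) := by
  rw [normalizedIndicator, setIntegral_indicator hA, setIntegral_const, smul_eq_mul,
    div_eq_mul_inv]

lemma integral_normalizedIndicator [IsFiniteMeasure P] (hA : MeasurableSet (A n))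
    (hA0 : P (A n) ≠ 0) : ∫ ω, normalizedIndicator P A n ω ∂P = 1 := by
  rw [← setIntegral_univ, setIntegral_normalizedIndicator hA, Set.univ_inter,
    div_self ((measureReal_ne_zero_iff (measure_ne_top P _)).2 hA0)]

lemma integrable_normalizedIndicator [IsFiniteMeasure P] (hA : MeasurableSet (A n)) :
    Integrable (normalizedIndicator P A n) P :=
  (integrable_const _).indicator hA

lemma martingale_normalizedIndicator [IsFiniteMeasure P] (hA : ∀ n, MeasurableSet (A n))
    (hanti : Antitone A) (hA0 : ∀ n, P (A n) ≠ 0) :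
    Martingale (normalizedIndicator P A) (Filtration.ofSets A hA) P := by
  refine martingale_of_setIntegral_eq_succ
    (fun n => stronglyMeasurable_const.indicator (Filtration.measurableSet_ofSets hA le_rfl))
    (fun n => integrable_normalizedIndicator (hA n)) fun n s hs => ?_
  have hPA (k : ℕ) : P.real (A k) ≠ 0 := (measureReal_ne_zero_iff (measure_ne_top P _)).2 (hA0 k)
  rw [setIntegral_normalizedIndicator (hA n), setIntegral_normalizedIndicator (hA (n + 1))]
  rcases Filtration.subset_or_disjoint_of_measurableSet_ofSets hA hanti hs with hsub | hdisj
  · rw [Set.inter_eq_right.2 hsub, Set.inter_eq_right.2 ((hanti n.le_succ).trans hsub),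
      div_self (hPA n), div_self (hPA (n + 1))]
  · rw [Set.inter_comm, hdisj.inter_eq, Set.inter_comm,
      (hdisj.mono_left (hanti n.le_succ)).inter_eq]
    simp

lemma Supermartingale.lintegral_ofReal_le {Ω : Type*} {mΩ : MeasurableSpace Ω} {P : Measure Ω}
    [IsFiniteMeasure P] {ℱ : Filtration ℕ mΩ} {Y : ℕ → Ω → ℝ} (hY : Supermartingale Y ℱ P)
    (hYn : 0 ≤ᵐ[P] Y n) :
    ∫⁻ ω, ENNReal.ofReal (Y n ω) ∂P ≤ ENNReal.ofReal (∫ ω, Y 0 ω ∂P) := by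
  rw [← ofReal_integral_eq_lintegral_ofReal (hY.integrable n) hYn]
  refine ENNReal.ofReal_le_ofReal ?_
  simpa only [setIntegral_univ] using hY.setIntegral_le n.zero_le MeasurableSet.univ

end MeasureTheory

def IsMartingaleCalibrator (f : ℝ → ℝ) : Prop :=
  ∀ (Ω : Type) (m : MeasurableSpace Ω) (P : Measure Ω),
      IsProbabilityMeasure P →
      ∀ (ℱ : Filtration ℕ m) (X : ℕ → Ω → ℝ),
      Martingale X ℱ P → (∀ n, 0 ≤ᵐ[P] X n) → (∫ ω, X 0 ω ∂P = 1) →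
      ∃ Y : ℕ → Ω → ℝ,
        Supermartingale Y ℱ P ∧
        (∀ n, 0 ≤ᵐ[P] Y n) ∧
        (∫ ω, Y 0 ω ∂P ≤ 1) ∧
        (∀ᵐ ω ∂P, ∀ n, f (max 1 (⨆ i : Fin (n + 1), X i ω)) ≤ Y n ω)

lemma MonotoneOn.monotone_max_one {f : ℝ → ℝ} (hf : MonotoneOn f (Set.Ici 1)) :
    Monotone fun t => f (max 1 t) := fun _ _ hab =>
  hf (Set.mem_Ici.2 (le_max_left _ _)) (Set.mem_Ici.2 (le_max_left _ _)) (max_le_max le_rfl hab)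

lemma exists_pow_le_and_min_le {r ω : ℝ} (hr : 0 < r) (hω : ω ∈ Set.Ioc 0 1) :
    ∀ n : ℕ, ∃ k ≤ n, ω ≤ r ^ k ∧ min (r ^ n)⁻¹ (r * ω⁻¹) ≤ (r ^ k)⁻¹
  | 0 => ⟨0, le_rfl, by simpa using hω.2, by simp⟩
  | n + 1 => by
    by_cases h : ω ≤ r ^ (n + 1)
    · exact ⟨n + 1, le_rfl, h, min_le_left _ _⟩
    obtain ⟨k, hk, hωk, hmin⟩ := exists_pow_le_and_min_le hr hω n
    have : r * ω⁻¹ ≤ (r ^ n)⁻¹ := calc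
      r * ω⁻¹ ≤ r * (r ^ (n + 1))⁻¹ := by gcongr; exact (not_le.1 h).le
      _ = (r ^ n)⁻¹ := by rw [pow_succ']; field_simp
    exact ⟨k, hk.trans n.le_succ, hωk, le_trans (le_min ((min_le_right _ _).trans this)
      (min_le_right _ _)) hmin⟩

lemma measureReal_Ioc_pow {r : ℝ} (hr0 : 0 < r) (hr1 : r ≤ 1) (n : ℕ) :
    (volume.restrict (Set.Ioc (0 : ℝ) 1)).real (Set.Ioc 0 (r ^ n)) = r ^ n := by
  rw [measureReal_def,
    Measure.restrict_eq_self _ (Set.Ioc_subset_Ioc le_rfl (pow_le_one₀ hr0.le hr1)),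
    Real.volume_Ioc, sub_zero, ENNReal.toReal_ofReal (by positivity)]

lemma min_le_iSup_normalizedIndicator {r : ℝ} (hr0 : 0 < r) (hr1 : r ≤ 1) {ω : ℝ}
    (hω : ω ∈ Set.Ioc 0 1) (n : ℕ) :
    min (r ^ n)⁻¹ (r * ω⁻¹) ≤
      ⨆ i : Fin (n + 1),
        normalizedIndicator (volume.restrict (Set.Ioc 0 1)) (fun k => Set.Ioc 0 (r ^ k)) i ω := by
  obtain ⟨k, hk, hωk, hmin⟩ := exists_pow_le_and_min_le hr0 hω n
  refine hmin.trans (le_of_eq_of_le ?_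
    (le_ciSup (Set.finite_range _).bddAbove (⟨k, by omega⟩ : Fin (n + 1))))
  change _ = normalizedIndicator _ (fun k => Set.Ioc 0 (r ^ k)) k ω
  rw [normalizedIndicator, Set.indicator_of_mem (Set.mem_Ioc.2 ⟨hω.1, hωk⟩),
    measureReal_Ioc_pow hr0 hr1]

lemma IsMartingaleCalibrator.lintegral_min_le_one {f : ℝ → ℝ} (hcal : IsMartingaleCalibrator f)
    (hmono : MonotoneOn f (Set.Ici 1)) {r : ℝ} (hr0 : 0 < r) (hr1 : r ≤ 1) (n : ℕ) :
    ∫⁻ x in Set.Ioc 0 1, ENNReal.ofReal (f (max 1 (min (r ^ n)⁻¹ (r * x⁻¹)))) ≤ 1 := by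
  set μ := volume.restrict (Set.Ioc (0 : ℝ) 1)
  have : IsProbabilityMeasure μ := ⟨by simp [μ]⟩
  set A : ℕ → Set ℝ := fun k => Set.Ioc 0 (r ^ k)
  have hA (k : ℕ) : MeasurableSet (A k) := measurableSet_Ioc
  have hanti : Antitone A := fun i j hij =>
    Set.Ioc_subset_Ioc le_rfl (pow_le_pow_of_le_one hr0.le hr1 hij)
  have hA0 (k : ℕ) : μ (A k) ≠ 0 := by
    rw [← measureReal_ne_zero_iff, measureReal_Ioc_pow hr0 hr1]
    positivity
  obtain ⟨Y, hY, hYnn, hY0, hdom⟩ := hcal ℝ _ μ inferInstance (Filtration.ofSets A hA)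
    (normalizedIndicator μ A) (martingale_normalizedIndicator hA hanti hA0)
    (fun k => Filter.Eventually.of_forall (normalizedIndicator_nonneg k))
    (integral_normalizedIndicator (hA 0) (hA0 0))
  calc _ ≤ ∫⁻ x, ENNReal.ofReal (Y n x) ∂μ := lintegral_mono_ae <| by
        filter_upwards [hdom, ae_restrict_mem measurableSet_Ioc] with x hx hxI
        exact ENNReal.ofReal_le_ofReal <|
          (hmono.monotone_max_one (min_le_iSup_normalizedIndicator hr0 hr1 hxI n)).trans (hx n)
    _ ≤ ENNReal.ofReal (∫ x, Y 0 x ∂μ) := hY.lintegral_ofReal_le (hYnn n)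
    _ ≤ 1 := ENNReal.ofReal_le_one.2 hY0

lemma IsMartingaleCalibrator.lintegral_le_one {f : ℝ → ℝ} (hcal : IsMartingaleCalibrator f)
    (hmono : MonotoneOn f (Set.Ici 1)) {r : ℝ} (hr0 : 0 < r) (hr1 : r < 1) :
    ∫⁻ x in Set.Ioc 0 1, ENNReal.ofReal (f (max 1 (r * x⁻¹))) ≤ 1 := by
  have hF := hmono.monotone_max_one
  set g : ℕ → ℝ → ℝ≥0∞ := fun n x => ENNReal.ofReal (f (max 1 (min (r ^ n)⁻¹ (r * x⁻¹))))
  have hg_mono : Monotone g := fun m n hmn x => ENNReal.ofReal_le_ofReal <| hF <|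
    min_le_min_right _ (inv_anti₀ (by positivity) (pow_le_pow_of_le_one hr0.le hr1.le hmn))
  have hg_meas (n : ℕ) : Measurable (g n) := ENNReal.measurable_ofReal.comp
    (hF.measurable.comp (measurable_const.min (measurable_inv.const_mul r)))
  calc _ ≤ ∫⁻ x in Set.Ioc 0 1, ⨆ n, g n x := by
        refine lintegral_mono fun x => ?_
        obtain ⟨n, hn⟩ := pow_unbounded_of_one_lt (r * x⁻¹) (one_lt_inv₀ hr0 |>.2 hr1)
        rw [inv_pow] at hn
        exact le_iSup_of_le n (by simp only [g, min_eq_right hn.le, le_refl])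
    _ = ⨆ n, ∫⁻ x in Set.Ioc 0 1, g n x := lintegral_iSup hg_meas hg_mono
    _ ≤ 1 := iSup_le (hcal.lintegral_min_le_one hmono hr0 hr1.le)

lemma ofReal_mul_setLIntegral_Ioc_comp_mul_left {r : ℝ} (hr : 0 < r) (g : ℝ → ℝ≥0∞) :
    ENNReal.ofReal r * ∫⁻ x in Set.Ioc 0 1, g (r * x) = ∫⁻ y in Set.Ioc 0 r, g y := by
  have := lintegral_image_eq_lintegral_abs_deriv_mul (s := Set.Ioc 0 1) measurableSet_Ioc
    (fun x _ => (hasDerivAt_const_mul r).hasDerivWithinAt)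
    (mul_right_injective₀ hr.ne').injOn g
  rw [Set.image_mul_left_Ioc hr, mul_zero, mul_one] at this
  rw [this, lintegral_const_mul' _ _ ENNReal.ofReal_ne_top]
  simp [abs_of_pos hr]

lemma IsMartingaleCalibrator.ofReal_mul_lintegral_le_one {f : ℝ → ℝ}
    (hcal : IsMartingaleCalibrator f) (hmono : MonotoneOn f (Set.Ici 1)) {r : ℝ} (hr0 : 0 < r)
    (hr1 : r < 1) : ENNReal.ofReal r * ∫⁻ x in Set.Ioc 0 1, ENNReal.ofReal (f x⁻¹) ≤ 1 := calc
  _ = ENNReal.ofReal r * ∫⁻ x in Set.Ioc 0 1, ENNReal.ofReal (f (max 1 (r * (r * x)⁻¹))) := by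
      congr 1
      refine setLIntegral_congr_fun measurableSet_Ioc fun x hx => ?_
      rw [mul_inv, mul_inv_cancel_left₀ hr0.ne', max_eq_right (one_le_inv₀ hx.1 |>.2 hx.2)]
  _ = ∫⁻ y in Set.Ioc 0 r, ENNReal.ofReal (f (max 1 (r * y⁻¹))) :=
      ofReal_mul_setLIntegral_Ioc_comp_mul_left hr0 fun y => ENNReal.ofReal (f (max 1 (r * y⁻¹)))
  _ ≤ ∫⁻ y in Set.Ioc 0 1, ENNReal.ofReal (f (max 1 (r * y⁻¹))) :=
      lintegral_mono_set (Set.Ioc_subset_Ioc le_rfl hr1.le)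
  _ ≤ 1 := hcal.lintegral_le_one hmono hr0 hr1

theorem martingale_calibrator_has_small_integral_general
    (f : ℝ → ℝ)
    (hmono : MonotoneOn f (Set.Ici (1 : ℝ)))
    (hcal : ∀ (Ω : Type) (m : MeasurableSpace Ω) (P : Measure Ω),
      IsProbabilityMeasure P →
      ∀ (ℱ : Filtration ℕ m) (X : ℕ → Ω → ℝ),
      Martingale X ℱ P → (∀ n, 0 ≤ᵐ[P] X n) → (∫ ω, X 0 ω ∂P = 1) →
      ∃ Y : ℕ → Ω → ℝ,
        Supermartingale Y ℱ P ∧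
        (∀ n, 0 ≤ᵐ[P] Y n) ∧
        (∫ ω, Y 0 ω ∂P ≤ 1) ∧
        (∀ᵐ ω ∂P, ∀ n, f (max 1 (⨆ i : Fin (n + 1), X i ω)) ≤ Y n ω)) :
    ∫⁻ x in Set.Ioc (0 : ℝ) 1, ENNReal.ofReal (f x⁻¹) ≤ 1 := by
  refine ENNReal.le_of_forall_lt_one_mul_le fun a ha => ?_
  obtain rfl | ha0 := eq_zero_or_pos a
  · simp
  have hr1 : a.toReal < 1 := ENNReal.toReal_lt_of_lt_ofReal (by rwa [ENNReal.ofReal_one])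
  rw [← ENNReal.ofReal_toReal ha.ne_top]
  exact IsMartingaleCalibrator.ofReal_mul_lintegral_le_one hcal hmono
    (ENNReal.toReal_pos ha0.ne' ha.ne_top) hr1

/-- If an increasing function `f : [1,∞) → [0,∞)` is a martingale
calibrator — for every probability space with filtration `(ℱ_n)` and every test
martingale `(X_n, ℱ_n)` there is a test supermartingale `(Y_n, ℱ_n)` with
`Y_n ≥ f(X*_n)` for all `n` almost surely, where `X*_n := max(1, max_{m ≤ n} X_m)` —
then `∫₀¹ f(1/x) dx ≤ 1`. -/
theorem martingale_calibrator_has_small_integral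
    (f : ℝ → ℝ)
    (hmono : MonotoneOn f (Set.Ici (1 : ℝ)))
    (hnonneg : ∀ x ∈ Set.Ici (1 : ℝ), 0 ≤ f x)
    (hcal : ∀ (Ω : Type) (m : MeasurableSpace Ω) (P : Measure Ω),
      IsProbabilityMeasure P →
      ∀ (ℱ : Filtration ℕ m) (X : ℕ → Ω → ℝ),
      Martingale X ℱ P → (∀ n, 0 ≤ᵐ[P] X n) → (∫ ω, X 0 ω ∂P = 1) →
      ∃ Y : ℕ → Ω → ℝ,
        Supermartingale Y ℱ P ∧
        (∀ n, 0 ≤ᵐ[P] Y n) ∧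
        (∫ ω, Y 0 ω ∂P ≤ 1) ∧
        (∀ᵐ ω ∂P, ∀ n, f (max 1 (⨆ i : Fin (n + 1), X i ω)) ≤ Y n ω)) :
    ∫⁻ x in Set.Ioc (0 : ℝ) 1, ENNReal.ofReal (f x⁻¹) ≤ 1 :=
  martingale_calibrator_has_small_integral_general f hmono hcal
end

section
/- A martingale calibrator f : [1,∞) → [0,∞) (an increasing function with ∫₀¹ f(1/x) dx ≤ 1) is admissible — meaning there is no increasing function g : [1,∞) → [0,∞) with ∫₀¹ g(1/x) dx ≤ 1, g(x) ≥ f(x) for all x ∈ [1,∞), and g(x) > f(x) for some x — if and only if f is right-continuous and ∫₀¹ f(1/x) dx = 1. -/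
open MeasureTheory ENNReal Filter Topology

/-!
If the mass `∫₀¹ f(1/x) dx` is below `1`, adding the missing mass as a constant gives a strictly
larger calibrator; if `f` jumps to the right at `x₀`, raising `f x₀` to its right limit changes
`f` at a single point only, so the mass is unchanged. Conversely, if `f` is right-continuous
and `g ≥ f` with `g x₀ > f x₀`, monotonicity of `g` keeps `g` above `f + ε` on a whole interval
`[x₀, b)`, which adds `ε (1/x₀ - 1/b) > 0` to the mass, so a calibrator of mass `1` is undominated.
-/

section Order

variable {α β : Type*} [LinearOrder α]

theorem MonotoneOn.update [Preorder β] {f : α → β} {s : Set α} {a : α} {b : β}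
    (hf : MonotoneOn f s) (hlt : ∀ x ∈ s, x < a → f x ≤ b) (hgt : ∀ x ∈ s, a < x → b ≤ f x) :
    MonotoneOn (Function.update f a b) s := by
  intro x hx y hy hxy
  by_cases hxa : x = a <;> by_cases hya : y = a
  · subst hxa hya; rfl
  · subst hxa
    rw [Function.update_self, Function.update_of_ne hya]
    exact hgt y hy (lt_of_le_of_ne hxy (Ne.symm hya))
  · subst hya
    rw [Function.update_self, Function.update_of_ne hxa]
    exact hlt x hx (lt_of_le_of_ne hxy hxa)
  · rw [Function.update_of_ne hxa, Function.update_of_ne hya]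
    exact hf hx hy hxy

variable [TopologicalSpace α] [OrderTopology α] [NoMaxOrder α]

theorem MonotoneOn.exists_gap_of_not_tendsto_nhdsGT [ConditionallyCompleteLinearOrder β]
    [TopologicalSpace β] [OrderTopology β] {f : α → β} {a : α} (hf : MonotoneOn f (Set.Ici a))
    (h : ¬ Tendsto f (𝓝[>] a) (𝓝 (f a))) : ∃ L, f a < L ∧ ∀ x, a < x → L ≤ f x := by
  have hfa : ∀ y ∈ f '' Set.Ioi a, f a ≤ y :=
    Set.forall_mem_image.2 fun x hx => hf Set.self_mem_Ici (Set.Ioi_subset_Ici_self hx) hx.le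
  have hbdd : BddBelow (f '' Set.Ioi a) := ⟨f a, hfa⟩
  have hlim := (hf.mono Set.Ioi_subset_Ici_self).tendsto_nhdsGT hbdd
  refine ⟨sInf (f '' Set.Ioi a), lt_of_le_of_ne (le_csInf (Set.nonempty_Ioi.image f) hfa) ?_,
    fun x hx => csInf_le hbdd (Set.mem_image_of_mem f hx)⟩
  exact fun heq => h (heq ▸ hlim)

theorem exists_Ico_add_le_of_tendsto_nhdsGT {f g : α → ℝ} {a : α}
    (hf : Tendsto f (𝓝[>] a) (𝓝 (f a))) (hg : MonotoneOn g (Set.Ici a)) (hfg : f a < g a) :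
    ∃ b, a < b ∧ ∃ ε > 0, ∀ y ∈ Set.Ico a b, f y + ε ≤ g y := by
  set ε := (g a - f a) / 2
  have hε : 0 < ε := half_pos (sub_pos.2 hfg)
  have hgε : g a = f a + 2 * ε := by simp only [ε]; ring
  obtain ⟨b, hab, hb⟩ := (nhdsGT_basis a).eventually_iff.1 <|
    hf.eventually_lt_const (lt_add_of_pos_right (f a) hε)
  refine ⟨b, hab, ε, hε, fun y ⟨hay, hyb⟩ => ?_⟩
  rcases hay.eq_or_lt with rfl | hay
  · linarith
  · have hgy := hg Set.self_mem_Ici hay.le hay.le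
    linarith [hb ⟨hay, hyb⟩]

end Order

theorem setLIntegral_ofReal_add_const {α : Type*} [MeasurableSpace α] {μ : Measure α}
    {s : Set α} (hs : MeasurableSet s) {f : α → ℝ} (hf : ∀ x ∈ s, 0 ≤ f x) {c : ℝ} (hc : 0 ≤ c) :
    ∫⁻ x in s, ENNReal.ofReal (f x + c) ∂μ =
      ∫⁻ x in s, ENNReal.ofReal (f x) ∂μ + ENNReal.ofReal c * μ s := by
  rw [← setLIntegral_const, ← lintegral_add_right _ measurable_const]
  exact setLIntegral_congr_fun hs fun x hx => ENNReal.ofReal_add (hf x hx) hc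

namespace MartingaleCalibrator

noncomputable def mass (f : ℝ → ℝ) : ℝ≥0∞ :=
  ∫⁻ x in Set.Ioc (0 : ℝ) 1, ENNReal.ofReal (f x⁻¹)

def IsAdmissible (f : ℝ → ℝ) : Prop :=
  ¬ ∃ g : ℝ → ℝ, MonotoneOn g (Set.Ici 1) ∧ (∀ x ∈ Set.Ici (1 : ℝ), 0 ≤ g x) ∧ mass g ≤ 1 ∧
    (∀ x ∈ Set.Ici (1 : ℝ), f x ≤ g x) ∧ ∃ x ∈ Set.Ici (1 : ℝ), f x < g x

variable {f g : ℝ → ℝ}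

theorem inv_mem_Ici_one {x : ℝ} (hx : x ∈ Set.Ioc 0 1) : x⁻¹ ∈ Set.Ici 1 :=
  (one_le_inv₀ hx.1).2 hx.2

theorem mass_add_const (hf : ∀ x ∈ Set.Ici 1, 0 ≤ f x) {c : ℝ} (hc : 0 ≤ c) :
    mass (fun x => f x + c) = mass f + ENNReal.ofReal c := by
  rw [mass, mass, setLIntegral_ofReal_add_const measurableSet_Ioc
    (fun x hx => hf _ (inv_mem_Ici_one hx)) hc, Real.volume_Ioc, sub_zero, ENNReal.ofReal_one,
    mul_one]

theorem mass_update (f : ℝ → ℝ) (a b : ℝ) : mass (Function.update f a b) = mass f := by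
  refine lintegral_congr_ae (ae_restrict_of_ae ?_)
  filter_upwards [volume.ae_ne a⁻¹] with x hx
  rw [Function.update_of_ne fun h => hx (by rw [← h, inv_inv])]

theorem mass_add_le (hf : ∀ x ∈ Set.Ici 1, 0 ≤ f x) (hfg : ∀ x ∈ Set.Ici 1, f x ≤ g x)
    {a b ε : ℝ} (ha : 1 ≤ a) (hab : a < b) (hε : 0 ≤ ε)
    (hgap : ∀ y ∈ Set.Ico a b, f y + ε ≤ g y) :
    mass f + ENNReal.ofReal ε * ENNReal.ofReal (a⁻¹ - b⁻¹) ≤ mass g := by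
  have ha₀ : 0 < a := one_pos.trans_le ha
  have hb₀ : 0 < b := ha₀.trans hab
  set S := Set.Ioc b⁻¹ a⁻¹
  have hS : S ⊆ Set.Ioc 0 1 :=
    Set.Ioc_subset_Ioc (inv_pos.2 hb₀).le (inv_le_one_of_one_le₀ ha)
  calc mass f + ENNReal.ofReal ε * ENNReal.ofReal (a⁻¹ - b⁻¹)
      = ∫⁻ x in Set.Ioc (0 : ℝ) 1,
          ENNReal.ofReal (f x⁻¹) + S.indicator (fun _ => ENNReal.ofReal ε) x := by
        rw [lintegral_add_right _ (measurable_const.indicator measurableSet_Ioc),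
          lintegral_indicator_const measurableSet_Ioc, Measure.restrict_apply measurableSet_Ioc,
          Set.inter_eq_left.2 hS, Real.volume_Ioc, mass]
    _ ≤ mass g := by
        refine setLIntegral_mono' measurableSet_Ioc fun x hx => ?_
        by_cases hxS : x ∈ S
        · rw [Set.indicator_of_mem hxS, ← ENNReal.ofReal_add (hf _ (inv_mem_Ici_one hx)) hε]
          refine ENNReal.ofReal_le_ofReal (hgap _ ⟨?_, ?_⟩)
          · exact (le_inv_comm₀ ha₀ hx.1).2 hxS.2
          · exact (inv_lt_comm₀ hx.1 hb₀).2 hxS.1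
        · rw [Set.indicator_of_notMem hxS, add_zero]
          exact ENNReal.ofReal_le_ofReal (hfg _ (inv_mem_Ici_one hx))

theorem not_isAdmissible_of_mass_lt_one (hmono : MonotoneOn f (Set.Ici 1))
    (hf : ∀ x ∈ Set.Ici 1, 0 ≤ f x) (hlt : mass f < 1) : ¬ IsAdmissible f := by
  set c := (1 - mass f).toReal
  have hc : ENNReal.ofReal c = 1 - mass f := ENNReal.ofReal_toReal (sub_ne_top one_ne_top)
  have hc₀ : 0 < c := ENNReal.toReal_pos (tsub_pos_of_lt hlt).ne' (sub_ne_top one_ne_top)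
  refine not_not.2 ⟨fun x => f x + c, fun x hx y hy hxy => add_le_add_left (hmono hx hy hxy) c,
    fun x hx => add_nonneg (hf x hx) hc₀.le, ?_, fun x _ => le_add_of_nonneg_right hc₀.le,
    1, Set.self_mem_Ici, lt_add_of_pos_right _ hc₀⟩
  rw [mass_add_const hf hc₀.le, hc, add_tsub_cancel_of_le hlt.le]

theorem not_isAdmissible_of_not_tendsto_nhdsGT (hmono : MonotoneOn f (Set.Ici 1))
    (hf : ∀ x ∈ Set.Ici 1, 0 ≤ f x) (hmass : mass f ≤ 1) {x₀ : ℝ} (hx₀ : x₀ ∈ Set.Ici 1)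
    (hjump : ¬ Tendsto f (𝓝[>] x₀) (𝓝 (f x₀))) : ¬ IsAdmissible f := by
  obtain ⟨L, hfL, hLf⟩ :=
    (hmono.mono (Set.Ici_subset_Ici.2 hx₀)).exists_gap_of_not_tendsto_nhdsGT hjump
  have hle : f ≤ Function.update f x₀ L := le_update_iff.2 ⟨hfL.le, fun _ _ => le_rfl⟩
  refine not_not.2 ⟨Function.update f x₀ L,
    hmono.update (fun x hx hlt => (hmono hx hx₀ hlt.le).trans hfL.le) (fun x _ hlt => hLf x hlt),
    fun x hx => (hf x hx).trans (hle x), (mass_update f x₀ L).trans_le hmass,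
    fun x _ => hle x, x₀, hx₀, by rwa [Function.update_self]⟩

theorem isAdmissible_of_tendsto_nhdsGT_of_mass_eq_one (hf : ∀ x ∈ Set.Ici 1, 0 ≤ f x)
    (hrc : ∀ x ∈ Set.Ici 1, Tendsto f (𝓝[>] x) (𝓝 (f x))) (hmass : mass f = 1) :
    IsAdmissible f := by
  rintro ⟨g, hgmono, -, hgmass, hfg, a, ha, hlt⟩
  obtain ⟨b, hab, ε, hε, hgap⟩ :=
    exists_Ico_add_le_of_tendsto_nhdsGT (hrc a ha) (hgmono.mono (Set.Ici_subset_Ici.2 ha)) hlt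
  have hgain : ENNReal.ofReal ε * ENNReal.ofReal (a⁻¹ - b⁻¹) ≠ 0 :=
    mul_ne_zero (ENNReal.ofReal_pos.2 hε).ne'
      (ENNReal.ofReal_pos.2 (sub_pos.2 (inv_strictAnti₀ (one_pos.trans_le ha) hab))).ne'
  have hle := (mass_add_le hf hfg ha hab hε.le hgap).trans hgmass
  rw [hmass] at hle
  exact (ENNReal.lt_add_right one_ne_top hgain).not_ge hle

end MartingaleCalibrator

/-- A martingale calibrator `f : [1,∞) → [0,∞)` (an increasing
function with `∫₀¹ f(1/x) dx ≤ 1`) is admissible — i.e. there is no increasing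
`g : [1,∞) → [0,∞)` with `∫₀¹ g(1/x) dx ≤ 1`, `g ≥ f` on `[1,∞)` and `g(x) > f(x)`
for some `x` — if and only if `f` is right-continuous and `∫₀¹ f(1/x) dx = 1`. -/
theorem martingale_calibrator_admissible_iff
    (f : ℝ → ℝ)
    (hmono : MonotoneOn f (Set.Ici (1 : ℝ)))
    (hnonneg : ∀ x ∈ Set.Ici (1 : ℝ), 0 ≤ f x)
    (hint : ∫⁻ x in Set.Ioc (0 : ℝ) 1, ENNReal.ofReal (f x⁻¹) ≤ 1) :
    (¬ ∃ g : ℝ → ℝ,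
        MonotoneOn g (Set.Ici (1 : ℝ)) ∧
        (∀ x ∈ Set.Ici (1 : ℝ), 0 ≤ g x) ∧
        (∫⁻ x in Set.Ioc (0 : ℝ) 1, ENNReal.ofReal (g x⁻¹) ≤ 1) ∧
        (∀ x ∈ Set.Ici (1 : ℝ), f x ≤ g x) ∧
        (∃ x ∈ Set.Ici (1 : ℝ), f x < g x)) ↔
    ((∀ x ∈ Set.Ici (1 : ℝ), Tendsto f (nhdsWithin x (Set.Ioi x)) (𝓝 (f x))) ∧
      ∫⁻ x in Set.Ioc (0 : ℝ) 1, ENNReal.ofReal (f x⁻¹) = 1) := by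
  change MartingaleCalibrator.IsAdmissible f ↔ _ ∧ MartingaleCalibrator.mass f = 1
  refine ⟨fun hadm => ⟨fun x hx => ?_, ?_⟩, fun ⟨hrc, hmass⟩ =>
    MartingaleCalibrator.isAdmissible_of_tendsto_nhdsGT_of_mass_eq_one hnonneg hrc hmass⟩
  · by_contra hjump
    exact MartingaleCalibrator.not_isAdmissible_of_not_tendsto_nhdsGT hmono hnonneg hint hx
      hjump hadm
  · by_contra hne
    exact MartingaleCalibrator.not_isAdmissible_of_mass_lt_one hmono hnonneg
      (hint.lt_of_ne hne) hadm
end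

section
/- For every α ∈ (0,1), the function f(y) := α·y^{1−α} is an admissible martingale calibrator. In particular, for every probability space (Ω, F, P) with filtration (F_n)_{n∈ℕ} and every test supermartingale (X_n, F_n), E[α·(X*_∞)^{1−α}] ≤ 1, where X*_∞ := sup_{n∈ℕ} max(X_n, 1), and ∫₀¹ α·(1/x)^{1−α} dx = 1. -/
/-!
Ville's inequality `P(∃ n, s ≤ X n) ≤ E[X 0] / s`, obtained by optional stopping at the first
time `X` enters `[s, ∞)`, says that `X*_∞` is stochastically dominated by `1/U` with `U` uniform
on `(0, 1]`. By the layer-cake formula, `E[α (X*_∞)^(1-α)] ≤ ∫₀¹ α x^(α-1) dx = 1`.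
Admissibility: `f` is continuous, so an increasing `g ≥ f` with `f x₀ < g x₀` exceeds `f`
by a fixed margin on some `[x₀, x₁)`, which pushes `∫₀¹ g(1/x) dx` strictly above `1`.
-/

open MeasureTheory Set
open scoped ENNReal

theorem lintegral_Ioc_zero_one_inv_rpow {q : ℝ} (hq : q < 1) :
    ∫⁻ x in Ioc (0 : ℝ) 1, ENNReal.ofReal (x⁻¹ ^ q) = ENNReal.ofReal (1 - q)⁻¹ := by
  have h_inv_rpow : ∀ x ∈ Ioc (0 : ℝ) 1,
      ENNReal.ofReal (x⁻¹ ^ q) = ENNReal.ofReal (x ^ (-q)) := fun x hx => by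
    rw [Real.inv_rpow hx.1.le, Real.rpow_neg hx.1.le]
  have h_int : IntegrableOn (fun x : ℝ => x ^ (-q)) (Ioc 0 1) :=
    (intervalIntegral.intervalIntegrable_rpow' (by linarith)).1
  have h_nonneg : 0 ≤ᵐ[volume.restrict (Ioc (0 : ℝ) 1)] fun x => x ^ (-q) :=
    (ae_restrict_iff' measurableSet_Ioc).2 (ae_of_all _ fun x hx => Real.rpow_nonneg hx.1.le _)
  rw [setLIntegral_congr_fun measurableSet_Ioc h_inv_rpow,
    ← ofReal_integral_eq_lintegral_ofReal h_int h_nonneg,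
    ← intervalIntegral.integral_of_le zero_le_one, integral_rpow (Or.inl (by linarith)),
    Real.zero_rpow (by linarith), Real.one_rpow, sub_zero, neg_add_eq_sub, one_div]

theorem lintegral_Ioc_comp_inv_lt_of_le_of_lt {f g : ℝ → ℝ}
    (hf_nonneg : ∀ x ∈ Ici (1 : ℝ), 0 ≤ f x)
    (hf_fin : ∫⁻ x in Ioc (0 : ℝ) 1, ENNReal.ofReal (f x⁻¹) ≠ ∞)
    (hg : MonotoneOn g (Ici 1)) (hfg : ∀ x ∈ Ici (1 : ℝ), f x ≤ g x)
    {x₀ : ℝ} (hx₀ : 1 ≤ x₀) (hf_cont : ContinuousWithinAt f (Ici x₀) x₀) (hlt : f x₀ < g x₀) :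
    ∫⁻ x in Ioc (0 : ℝ) 1, ENNReal.ofReal (f x⁻¹) <
      ∫⁻ x in Ioc (0 : ℝ) 1, ENNReal.ofReal (g x⁻¹) := by
  obtain ⟨d, hfd, hdg⟩ := exists_between hlt
  obtain ⟨x₁, hx₀₁, hIco⟩ : ∃ x₁ ∈ Ioi x₀, Ico x₀ x₁ ⊆ {y | f y < d} :=
    mem_nhdsGE_iff_exists_Ico_subset.1 (hf_cont.eventually_lt continuousWithinAt_const hfd)
  have hx₀_pos : 0 < x₀ := one_pos.trans_le hx₀
  -- on `S` we have `x⁻¹ ∈ [x₀, x₁)`, where `f < d < g x₀ ≤ g`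
  set S := Ioc x₁⁻¹ x₀⁻¹
  have hS_sub : S ⊆ Ioc 0 1 := fun x hx =>
    ⟨(inv_pos.2 (hx₀_pos.trans hx₀₁)).trans hx.1, hx.2.trans (inv_le_one_of_one_le₀ hx₀)⟩
  have hS_pos : volume S ≠ 0 := by
    rw [Real.volume_Ioc, ENNReal.ofReal_ne_zero_iff, sub_pos]
    exact inv_strictAnti₀ hx₀_pos hx₀₁
  have h_gap : 0 < ENNReal.ofReal (g x₀ - d) := ENNReal.ofReal_pos.2 (sub_pos.2 hdg)
  have h_pointwise : ∀ x ∈ Ioc (0 : ℝ) 1,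
      ENNReal.ofReal (f x⁻¹) + S.indicator (fun _ => ENNReal.ofReal (g x₀ - d)) x ≤
        ENNReal.ofReal (g x⁻¹) := by
    intro x hx
    have hx_inv : x⁻¹ ∈ Ici (1 : ℝ) := one_le_inv₀ hx.1 |>.2 hx.2
    by_cases hxS : x ∈ S
    · have hx₀_le : x₀ ≤ x⁻¹ := le_inv_of_le_inv₀ hx.1 hxS.2
      have hlt_x₁ : x⁻¹ < x₁ := inv_lt_of_inv_lt₀ (hx₀_pos.trans hx₀₁) hxS.1
      have hfx : f x⁻¹ < d := hIco ⟨hx₀_le, hlt_x₁⟩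
      rw [indicator_of_mem hxS, ← ENNReal.ofReal_add (hf_nonneg _ hx_inv) (sub_pos.2 hdg).le]
      exact ENNReal.ofReal_le_ofReal (by linarith [hg (mem_Ici.2 hx₀) hx_inv hx₀_le])
    · rw [indicator_of_notMem hxS, add_zero]
      exact ENNReal.ofReal_le_ofReal (hfg _ hx_inv)
  calc ∫⁻ x in Ioc (0 : ℝ) 1, ENNReal.ofReal (f x⁻¹)
      < (∫⁻ x in Ioc (0 : ℝ) 1, ENNReal.ofReal (f x⁻¹)) + ENNReal.ofReal (g x₀ - d) * volume S :=
        ENNReal.lt_add_right hf_fin (mul_ne_zero h_gap.ne' hS_pos)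
    _ = ∫⁻ x in Ioc (0 : ℝ) 1,
          ENNReal.ofReal (f x⁻¹) + S.indicator (fun _ => ENNReal.ofReal (g x₀ - d)) x := by
        rw [lintegral_add_right _ (measurable_const.indicator measurableSet_Ioc),
          lintegral_indicator measurableSet_Ioc, Measure.restrict_restrict measurableSet_Ioc,
          inter_eq_left.2 hS_sub, setLIntegral_const]
    _ ≤ ∫⁻ x in Ioc (0 : ℝ) 1, ENNReal.ofReal (g x⁻¹) :=
        setLIntegral_mono_ae' measurableSet_Ioc (ae_of_all _ h_pointwise)

theorem lintegral_rpow_le_of_meas_lt_le {α β : Type*} [MeasurableSpace α] [MeasurableSpace β]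
    {μ : Measure α} {ν : Measure β} {f : α → ℝ} {g : β → ℝ}
    (hf : 0 ≤ᵐ[μ] f) (hf_meas : AEMeasurable f μ) (hg : 0 ≤ᵐ[ν] g) (hg_meas : AEMeasurable g ν)
    {p : ℝ} (hp : 0 < p) (h_tail : ∀ t > 0, μ {a | t < f a} ≤ ν {b | t < g b}) :
    ∫⁻ a, ENNReal.ofReal (f a ^ p) ∂μ ≤ ∫⁻ b, ENNReal.ofReal (g b ^ p) ∂ν := by
  rw [lintegral_rpow_eq_lintegral_meas_lt_mul μ hf hf_meas hp,
    lintegral_rpow_eq_lintegral_meas_lt_mul ν hg hg_meas hp]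
  gcongr ENNReal.ofReal p * ?_
  exact setLIntegral_mono' measurableSet_Ioi fun t ht => by gcongr; exact h_tail t ht

namespace MeasureTheory.Supermartingale

variable {Ω : Type*} {m : MeasurableSpace Ω} {P : Measure Ω} {ℱ : Filtration ℕ m}
  {X : ℕ → Ω → ℝ}

theorem expected_stoppedValue_antitone [SigmaFiniteFiltration P ℱ]
    (hX : Supermartingale X ℱ P) {τ π : Ω → ℕ∞} (hτ : IsStoppingTime ℱ τ)
    (hπ : IsStoppingTime ℱ π) (hle : τ ≤ π) {N : ℕ} (hbdd : ∀ ω, π ω ≤ N) :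
    ∫ ω, stoppedValue X π ω ∂P ≤ ∫ ω, stoppedValue X τ ω ∂P := by
  have h := hX.neg.expected_stoppedValue_mono hτ hπ hle hbdd
  simpa only [stoppedValue, Pi.neg_apply, integral_neg, neg_le_neg_iff] using h

theorem mul_measureReal_exists_le_le_integral [IsFiniteMeasure P]
    (hX : Supermartingale X ℱ P) (hX_nonneg : ∀ n, 0 ≤ᵐ[P] X n) (s : ℝ) (N : ℕ) :
    s * P.real {ω | ∃ k ≤ N, s ≤ X k ω} ≤ ∫ ω, X 0 ω ∂P := by
  set A := {ω | ∃ k ≤ N, s ≤ X k ω}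
  have hA : MeasurableSet A := by
    simp only [A, ofPred_exists]
    exact .iUnion fun k => (MeasurableSet.const _).inter <| measurableSet_le measurable_const
      ((hX.stronglyMeasurable k).measurable.le (ℱ.le k))
  let τ : Ω → ℕ∞ := fun ω => (hittingBtwn X (Ici s) 0 N ω : ℕ)
  have hτ : IsStoppingTime ℱ τ :=
    hX.stronglyAdapted.adapted.isStoppingTime_hittingBtwn measurableSet_Ici
  have hτ_le : ∀ ω, τ ω ≤ N := fun ω => WithTop.coe_le_coe.2 (hittingBtwn_le ω)
  have h_int : Integrable (stoppedValue X τ) P :=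
    integrable_stoppedValue ℕ hτ hX.integrable hτ_le
  have h_hit : ∀ ω ∈ A, s ≤ stoppedValue X τ ω := fun ω ⟨k, hk, hsk⟩ =>
    stoppedValue_hittingBtwn_mem ⟨k, ⟨Nat.zero_le k, hk⟩, hsk⟩
  have h_nonneg : 0 ≤ᵐ[P] stoppedValue X τ := by
    filter_upwards [ae_all_iff.2 hX_nonneg] with ω hω using hω _
  calc s * P.real A
      ≤ ∫ ω in A, stoppedValue X τ ω ∂P :=
        setIntegral_ge_of_const_le_real hA (measure_ne_top _ _) h_hit h_int.integrableOn
    _ ≤ ∫ ω, stoppedValue X τ ω ∂P := setIntegral_le_integral h_int h_nonneg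
    _ ≤ ∫ ω, X 0 ω ∂P := by
        simpa only [stoppedValue_const] using hX.expected_stoppedValue_antitone
          (isStoppingTime_const ℱ 0) hτ (fun _ => zero_le) hτ_le

theorem measure_exists_le_le [IsFiniteMeasure P]
    (hX : Supermartingale X ℱ P) (hX_nonneg : ∀ n, 0 ≤ᵐ[P] X n) {s : ℝ} (hs : 0 < s) :
    P {ω | ∃ n, s ≤ X n ω} ≤ ENNReal.ofReal ((∫ ω, X 0 ω ∂P) / s) := by
  have h_union : {ω | ∃ n, s ≤ X n ω} = ⋃ N, {ω | ∃ k ≤ N, s ≤ X k ω} := by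
    ext ω
    simp only [mem_ofPred_eq, mem_iUnion]
    exact ⟨fun ⟨n, hn⟩ => ⟨n, n, le_rfl, hn⟩, fun ⟨_, k, _, hk⟩ => ⟨k, hk⟩⟩
  have h_mono : Monotone fun N => {ω | ∃ k ≤ N, s ≤ X k ω} :=
    fun _ _ hNM _ ⟨k, hk, hks⟩ => ⟨k, hk.trans hNM, hks⟩
  rw [h_union, h_mono.directed_le.measure_iUnion]
  refine iSup_le fun N => ?_
  rw [← ofReal_measureReal]
  exact ENNReal.ofReal_le_ofReal <| (le_div_iff₀' hs).2 <|
    hX.mul_measureReal_exists_le_le_integral hX_nonneg s N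

theorem measure_lt_iSup_max_one_le [IsProbabilityMeasure P]
    (hX : Supermartingale X ℱ P) (hX_nonneg : ∀ n, 0 ≤ᵐ[P] X n) (hX₀ : ∫ ω, X 0 ω ∂P ≤ 1)
    {t : ℝ} (ht : 0 < t) :
    P {ω | t < ⨆ n, max (X n ω) 1} ≤ volume.restrict (Ioc (0 : ℝ) 1) {x | t < x⁻¹} := by
  rcases lt_or_ge t 1 with ht_lt | ht_ge
  · have h_sub : Ioc (0 : ℝ) 1 ⊆ {x | t < x⁻¹} := fun x hx =>
      ht_lt.trans_le ((one_le_inv₀ hx.1).2 hx.2)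
    rw [Measure.restrict_apply_superset h_sub, Real.volume_Ioc, sub_zero, ENNReal.ofReal_one]
    exact prob_le_one
  have h_sub : {ω | t < ⨆ n, max (X n ω) 1} ⊆ {ω | ∃ n, t ≤ X n ω} := fun ω (hω : t < _) => by
    obtain ⟨n, hn⟩ := exists_lt_of_lt_ciSup hω
    exact ⟨n, ((lt_max_iff.1 hn).resolve_right ht_ge.not_gt).le⟩
  have h_Ioo : Ioo 0 t⁻¹ ⊆ {x | t < x⁻¹} ∩ Ioc (0 : ℝ) 1 := fun x hx =>
    ⟨(lt_inv_comm₀ hx.1 ht).1 hx.2, hx.1, hx.2.le.trans (inv_le_one_of_one_le₀ ht_ge)⟩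
  calc P {ω | t < ⨆ n, max (X n ω) 1}
      ≤ ENNReal.ofReal ((∫ ω, X 0 ω ∂P) / t) :=
        (measure_mono h_sub).trans (hX.measure_exists_le_le hX_nonneg ht)
    _ ≤ volume (Ioo 0 t⁻¹) := by
        rw [Real.volume_Ioo, sub_zero, ← one_div]
        exact ENNReal.ofReal_le_ofReal (div_le_div_of_nonneg_right hX₀ ht.le)
    _ ≤ volume.restrict (Ioc (0 : ℝ) 1) {x | t < x⁻¹} :=
        (measure_mono h_Ioo).trans (Measure.le_restrict_apply _ _)

theorem lintegral_ofReal_mul_rpow_iSup_max_one_le [IsProbabilityMeasure P]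
    (hX : Supermartingale X ℱ P) (hX_nonneg : ∀ n, 0 ≤ᵐ[P] X n) (hX₀ : ∫ ω, X 0 ω ∂P ≤ 1)
    {c : ℝ} (hc : 0 ≤ c) {p : ℝ} (hp : 0 < p) :
    ∫⁻ ω, ENNReal.ofReal (c * (⨆ n, max (X n ω) 1) ^ p) ∂P ≤
      ∫⁻ x in Ioc (0 : ℝ) 1, ENNReal.ofReal (c * x⁻¹ ^ p) := by
  have h_meas : Measurable fun ω => ⨆ n, max (X n ω) 1 := .iSup fun n =>
    ((hX.stronglyMeasurable n).measurable.le (ℱ.le n)).max measurable_const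
  have h_nonneg : ∀ ω, 0 ≤ ⨆ n, max (X n ω) 1 := fun ω =>
    Real.iSup_nonneg fun n => zero_le_one.trans (le_max_right _ _)
  simp_rw [ENNReal.ofReal_mul hc]
  rw [lintegral_const_mul' _ _ ENNReal.ofReal_ne_top,
    lintegral_const_mul' _ _ ENNReal.ofReal_ne_top]
  gcongr ENNReal.ofReal c * ?_
  exact lintegral_rpow_le_of_meas_lt_le (ae_of_all _ h_nonneg) h_meas.aemeasurable
    ((ae_restrict_iff' measurableSet_Ioc).2 (ae_of_all _ fun x hx => inv_nonneg.2 hx.1.le))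
    measurable_inv.aemeasurable hp fun t ht => hX.measure_lt_iSup_max_one_le hX_nonneg hX₀ ht

end MeasureTheory.Supermartingale

/-- For every `α ∈ (0,1)`, `f(y) = α·y^{1-α}` is an admissible
martingale calibrator: no martingale calibrator strictly dominates it; for every
test supermartingale `(X_n, ℱ_n)` on any probability space,
`E[α·(X*_∞)^{1-α}] ≤ 1` where `X*_∞ := sup_n max(X_n, 1)`; and
`∫₀¹ α·(1/x)^{1-α} dx = 1`. -/
theorem power_function_is_admissible_martingale_calibrator
    (α : ℝ) (hα : α ∈ Set.Ioo (0 : ℝ) 1) :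
    (¬ ∃ g : ℝ → ℝ,
        MonotoneOn g (Set.Ici (1 : ℝ)) ∧
        (∀ x ∈ Set.Ici (1 : ℝ), 0 ≤ g x) ∧
        (∫⁻ x in Set.Ioc (0 : ℝ) 1, ENNReal.ofReal (g x⁻¹) ≤ 1) ∧
        (∀ x ∈ Set.Ici (1 : ℝ), α * x ^ (1 - α) ≤ g x) ∧
        (∃ x ∈ Set.Ici (1 : ℝ), α * x ^ (1 - α) < g x)) ∧
    (∀ (Ω : Type) (m : MeasurableSpace Ω) (P : Measure Ω),
      IsProbabilityMeasure P →
      ∀ (ℱ : Filtration ℕ m) (X : ℕ → Ω → ℝ),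
      Supermartingale X ℱ P → (∀ n, 0 ≤ᵐ[P] X n) → (∫ ω, X 0 ω ∂P ≤ 1) →
      ∫⁻ ω, ENNReal.ofReal (α * (⨆ n, max (X n ω) 1) ^ (1 - α)) ∂P ≤ 1) ∧
    ∫⁻ x in Set.Ioc (0 : ℝ) 1, ENNReal.ofReal (α * (x⁻¹) ^ (1 - α)) = 1 := by
  obtain ⟨hα_pos, hα_lt_one⟩ := hα
  have h_one : ∫⁻ x in Ioc (0 : ℝ) 1, ENNReal.ofReal (α * x⁻¹ ^ (1 - α)) = 1 := by
    simp_rw [ENNReal.ofReal_mul hα_pos.le]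
    rw [lintegral_const_mul' _ _ ENNReal.ofReal_ne_top,
      lintegral_Ioc_zero_one_inv_rpow (by linarith), sub_sub_cancel,
      ← ENNReal.ofReal_mul hα_pos.le, mul_inv_cancel₀ hα_pos.ne', ENNReal.ofReal_one]
  refine ⟨?_, fun Ω m P _ ℱ X hX hX_nonneg hX₀ => ?_, h_one⟩
  · rintro ⟨g, hg_mono, -, hg_le_one, hfg, x₀, hx₀, hlt⟩
    have h_cont : ContinuousWithinAt (fun x : ℝ => α * x ^ (1 - α)) (Ici x₀) x₀ :=
      ((Real.continuousAt_rpow_const _ _ (Or.inr (by linarith))).const_mul α).continuousWithinAt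
    have h_lt := lintegral_Ioc_comp_inv_lt_of_le_of_lt
      (fun x hx => mul_nonneg hα_pos.le (Real.rpow_nonneg (zero_le_one.trans hx) _))
      (h_one ▸ ENNReal.one_ne_top) hg_mono hfg hx₀ h_cont hlt
    exact (h_one ▸ h_lt).not_ge hg_le_one
  · exact h_one ▸ hX.lintegral_ofReal_mul_rpow_iSup_max_one_le hX_nonneg hX₀ hα_pos.le
      (by linarith)
end
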